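/- arXiv:2511.16008 — 9 statements merged into one kernel-verified Lean document; each statement's English description precedes it below -/
import Mathlib

section
/- Let x1, x0 be Bessel sequences in X and u0 a Bessel sequence in U with synthesis operators Ξ1, Ξ0 ∈ L(ℓ²(ℕ),X), Υ0 ∈ L(ℓ²(ℕ),U), and suppose the data-generation assumption holds for (A_s,B_s). Then Σ_is = {(A_s,B_s)} if and only if the range of the column operator H ∈ L(ℓ²(ℕ), X×U), Hw = (Ξ0 w, Υ0 w), is dense in X×U. -/
noncomputable section

/-- `ℓ²(ℕ)`: the Hilbert space of square-summable complex sequences. -/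
abbrev l2 : Type := lp (fun _ : ℕ => ℂ) 2

/-- `η` is a Bessel sequence in `Y`. -/
def Bessel {Y : Type} [NormedAddCommGroup Y] [InnerProductSpace ℂ Y] (η : ℕ → Y) : Prop :=
  ∃ α : ℝ, 0 < α ∧ ∀ y : Y, ∑' k : ℕ, ‖(inner ℂ y (η k) : ℂ)‖ ^ 2 ≤ α * ‖y‖ ^ 2

/-- `T` is the synthesis operator associated with `η`: `T w = ∑ₖ wₖ • ηₖ`. -/
def IsSynthesis {Y : Type} [NormedAddCommGroup Y] [InnerProductSpace ℂ Y] (η : ℕ → Y)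
    (T : l2 →L[ℂ] Y) : Prop :=
  ∀ w : l2, HasSum (fun k : ℕ => w k • η k) (T w)

/-!
The solution set is the affine space `(As, Bs) + N` with
`N = {(C, D) | ∀ k, C (x0 k) + D (u0 k) = 0}`. Under `(C, D) ↦ C.coprod D`, and because every
`H w` is the sum `∑ₖ wₖ • (x0 k, u0 k)`, `N` becomes the set of operators `X × U →L X` that vanish
on the range of `H`. Such operators are all zero iff that range is dense: otherwise Hahn–Banach
gives a nonzero functional `f` killing it, and `f (·) • y` with `y ≠ 0` is a nonzero such operator.
-/

open ContinuousLinearMap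

theorem exists_dual_ne_zero_comp_eq_zero_of_not_denseRange {𝕜 V E : Type*} [RCLike 𝕜]
    [AddCommGroup V] [Module 𝕜 V] [NormedAddCommGroup E] [NormedSpace 𝕜 E]
    (H : V →ₗ[𝕜] E) (hH : ¬ DenseRange H) :
    ∃ f : StrongDual 𝕜 E, f ≠ 0 ∧ (f : E →ₗ[𝕜] 𝕜) ∘ₗ H = 0 := by
  set K := (LinearMap.range H).topologicalClosure
  -- makes `E ⧸ K` a normed space, which has a separating dual
  have : IsClosed (K : Set E) := (LinearMap.range H).isClosed_topologicalClosure
  obtain ⟨z, hz⟩ : ∃ z, z ∉ K := by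
    simpa [K, ← SetLike.mem_coe, Submodule.topologicalClosure_coe, LinearMap.coe_range,
      DenseRange, Dense] using hH
  obtain ⟨g, hg⟩ := SeparatingDual.exists_ne_zero (R := 𝕜) (x := K.mkQ z)
    ((Submodule.Quotient.mk_eq_zero K).not.2 hz)
  refine ⟨g ∘L K.mkQL, fun h => hg (by simpa using congr($h z)), ?_⟩
  ext v
  have hv : H v ∈ K := (LinearMap.range H).le_topologicalClosure (LinearMap.mem_range_self H v)
  simp [(Submodule.Quotient.mk_eq_zero K).2 hv]

theorem denseRange_iff_forall_comp_eq_zero {𝕜 V E F : Type*} [RCLike 𝕜]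
    [AddCommGroup V] [Module 𝕜 V] [TopologicalSpace V]
    [NormedAddCommGroup E] [NormedSpace 𝕜 E] [NormedAddCommGroup F] [NormedSpace 𝕜 F]
    [Nontrivial F] (H : V →L[𝕜] E) :
    DenseRange H ↔ ∀ L : E →L[𝕜] F, L ∘L H = 0 → L = 0 := by
  refine ⟨fun hH L hL => ?_, fun h => ?_⟩
  · exact DFunLike.coe_injective (hH.equalizer L.continuous continuous_zero congr($hL))
  · by_contra hH
    obtain ⟨f, hf, hfH⟩ := exists_dual_ne_zero_comp_eq_zero_of_not_denseRange (H : V →ₗ[𝕜] E) hH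
    obtain ⟨z, hz⟩ := DFunLike.ne_iff.1 hf
    obtain ⟨y, hy⟩ := exists_ne (0 : F)
    have hL := h (f.smulRight y) (by ext v; simpa using Or.inl congr($hfH v))
    exact smul_ne_zero hz hy congr($hL z)

theorem apply_lp_single_of_hasSum {E : Type*} [NormedAddCommGroup E] [NormedSpace ℂ E]
    {η : ℕ → E} {T : l2 →L[ℂ] E} (hT : ∀ w : l2, HasSum (fun k => w k • η k) (T w)) (k : ℕ) :
    T (lp.single 2 k 1) = η k := by
  refine (hT _).unique ?_
  convert hasSum_ite_eq k (η k) using 2 with j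
  by_cases hj : j = k <;> simp [lp.single_apply, hj]

theorem comp_eq_zero_iff_of_hasSum {E F : Type*} [NormedAddCommGroup E] [NormedSpace ℂ E]
    [NormedAddCommGroup F] [NormedSpace ℂ F]
    {η : ℕ → E} {T : l2 →L[ℂ] E} (hT : ∀ w : l2, HasSum (fun k => w k • η k) (T w))
    (L : E →L[ℂ] F) : L ∘L T = 0 ↔ ∀ k, L (η k) = 0 := by
  refine ⟨fun hL k => ?_, fun hL => ?_⟩
  · simpa [apply_lp_single_of_hasSum hT] using congr($hL (lp.single 2 k 1))
  · ext w
    show L (T w) = 0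
    exact (L.hasSum (hT w)).unique (by simp [hL])

theorem stmt_1_general
    {X : Type} [NormedAddCommGroup X] [InnerProductSpace ℂ X] [Nontrivial X]
    {U : Type} [NormedAddCommGroup U] [InnerProductSpace ℂ U]
    (x1 x0 : ℕ → X) (u0 : ℕ → U)
    (Ξ0 : l2 →L[ℂ] X) (Υ0 : l2 →L[ℂ] U)
    (hΞ0 : IsSynthesis x0 Ξ0) (hΥ0 : IsSynthesis u0 Υ0)
    (As : X →L[ℂ] X) (Bs : U →L[ℂ] X)
    (hgen : ∀ k : ℕ, x1 k = As (x0 k) + Bs (u0 k)) :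
    ({p : (X →L[ℂ] X) × (U →L[ℂ] X) | ∀ k : ℕ, x1 k = p.1 (x0 k) + p.2 (u0 k)} = {(As, Bs)})
      ↔ DenseRange (fun w : l2 => ((Ξ0 w, Υ0 w) : X × U)) := by
  set H : l2 →L[ℂ] X × U := Ξ0.prod Υ0
  have hH : ∀ w : l2, HasSum (fun k => w k • (x0 k, u0 k)) (H w) :=
    fun w => (hΞ0 w).prodMk (hΥ0 w)
  let Φ := coprodEquiv (R := ℂ) (S := ℂ) (M₁ := X) (M₂ := U) (M := X)
  have hsol : ∀ p : (X →L[ℂ] X) × (U →L[ℂ] X),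
      (∀ k, x1 k = p.1 (x0 k) + p.2 (u0 k)) ↔ Φ (p - (As, Bs)) ∘L H = 0 := by
    intro p
    rw [comp_eq_zero_iff_of_hasSum hH]
    simp [Φ, hgen, sub_add_sub_comm, sub_eq_zero, eq_comm (a := As _ + Bs _)]
  change _ ↔ DenseRange H
  rw [denseRange_iff_forall_comp_eq_zero (F := X), Set.eq_singleton_iff_unique_mem]
  simp only [Set.mem_ofPred_eq, hsol, sub_self, map_zero, zero_comp, true_and]
  constructor
  · intro h L hL
    have hp := h (Φ.symm L + (As, Bs)) (by simpa using hL)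
    simpa using congr(Φ ($hp - (As, Bs)))
  · intro h p hp
    simpa [sub_eq_zero] using h _ hp

theorem stmt_1
    {X : Type} [NormedAddCommGroup X] [InnerProductSpace ℂ X] [CompleteSpace X] [Nontrivial X]
    {U : Type} [NormedAddCommGroup U] [InnerProductSpace ℂ U] [CompleteSpace U] [Nontrivial U]
    (x1 x0 : ℕ → X) (u0 : ℕ → U)
    (hx1B : Bessel x1) (hx0B : Bessel x0) (hu0B : Bessel u0)
    (Ξ1 Ξ0 : l2 →L[ℂ] X) (Υ0 : l2 →L[ℂ] U)
    (hΞ1 : IsSynthesis x1 Ξ1) (hΞ0 : IsSynthesis x0 Ξ0) (hΥ0 : IsSynthesis u0 Υ0)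
    (As : X →L[ℂ] X) (Bs : U →L[ℂ] X)
    (hgen : ∀ k : ℕ, x1 k = As (x0 k) + Bs (u0 k)) :
    ({p : (X →L[ℂ] X) × (U →L[ℂ] X) | ∀ k : ℕ, x1 k = p.1 (x0 k) + p.2 (u0 k)} = {(As, Bs)})
      ↔ DenseRange (fun w : l2 => ((Ξ0 w, Υ0 w) : X × U)) :=
  stmt_1_general x1 x0 u0 Ξ0 Υ0 hΞ0 hΥ0 As Bs hgen
end
end

section
/- Let x1, x0 be Bessel sequences in X and u0 a Bessel sequence in U with synthesis operators Ξ1, Ξ0, Υ0, and suppose the data-generation assumption holds. If K ∈ L(X,U) satisfies Σ_is ⊆ Σ_{K,M,γ} for some constants M ≥ 1 and γ > 0, then for every x ∈ X the vector (x, Kx) ∈ X×U lies in the closure of the range of the operator H ∈ L(ℓ²(ℕ), X×U) given by Hw = (Ξ0 w, Υ0 w). -/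
/-!
If a continuous functional `φ = (φE, φF)` on `X × U` annihilates every data point
`(x0 k, u0 k)`, then for each `ξ` the rank-one perturbations `As + ξ ⊗ φE`, `Bs + ξ ⊗ φF` still
explain the data, so `‖As + Bs K + ξ ⊗ (φE + φF ∘ K)‖ ≤ M γ` for every `ξ`. Scaling `ξ` forces
`φE + φF ∘ K = 0`, i.e. `φ (x, K x) = 0`. By Hahn–Banach `(x, K x)` therefore lies in the closed
span of the data, which sits inside the closure of the range of `H` since `H eₖ = (x0 k, u0 k)`.
-/

noncomputable section

section Separation

variable {𝕜 E : Type*} [RCLike 𝕜] [NormedAddCommGroup E] [NormedSpace 𝕜 E]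

theorem Submodule.exists_dual_eq_zero_of_notMem_topologicalClosure {S : Submodule 𝕜 E} {x : E}
    (hx : x ∉ S.topologicalClosure) :
    ∃ f : StrongDual 𝕜 E, (∀ y ∈ S, f y = 0) ∧ f x ≠ 0 := by
  have : IsClosed (S.topologicalClosure : Set E) := S.isClosed_topologicalClosure
  have hx' : S.topologicalClosure.mkQL x ≠ 0 := by
    simpa [Submodule.mkQL_apply, Submodule.Quotient.mk_eq_zero] using hx
  obtain ⟨g, hg⟩ := SeparatingDual.exists_ne_zero (R := 𝕜) hx'
  refine ⟨g.comp S.topologicalClosure.mkQL, fun y hy => ?_, hg⟩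
  have : S.topologicalClosure.mkQL y = 0 := by
    simpa [Submodule.mkQL_apply, Submodule.Quotient.mk_eq_zero] using S.le_topologicalClosure hy
  simp [this]

end Separation

section Bounded

variable {𝕜 E : Type*} [NontriviallyNormedField 𝕜] [NormedAddCommGroup E] [NormedSpace 𝕜 E]

theorem eq_zero_of_forall_norm_add_smul_le {a b : E} {C : ℝ} (h : ∀ t : 𝕜, ‖a + t • b‖ ≤ C) :
    b = 0 := by
  by_contra hb
  have hb' : 0 < ‖b‖ := norm_pos_iff.mpr hb
  obtain ⟨t, ht⟩ := NormedField.exists_lt_norm 𝕜 ((C + ‖a‖) / ‖b‖)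
  have : ‖t‖ * ‖b‖ ≤ C + ‖a‖ := by
    calc ‖t‖ * ‖b‖ = ‖t • b‖ := (norm_smul t b).symm
      _ = ‖(a + t • b) - a‖ := by rw [add_sub_cancel_left]
      _ ≤ ‖a + t • b‖ + ‖a‖ := norm_sub_le _ _
      _ ≤ C + ‖a‖ := by linarith [h t]
  rw [div_lt_iff₀ hb'] at ht
  linarith

theorem ContinuousLinearMap.eq_zero_of_forall_smulRight_eq_zero {f : StrongDual 𝕜 E}
    (h : ∀ ξ : E, f.smulRight ξ = 0) : f = 0 := by
  ext y
  have : f y • y = 0 := congrArg (fun T : E →L[𝕜] E => T y) (h y)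
  rcases smul_eq_zero.mp this with hfy | rfl
  · exact hfy
  · exact map_zero f

end Bounded

section Perturbation

variable {𝕜 E F ι : Type*} [RCLike 𝕜] [NormedAddCommGroup E] [NormedSpace 𝕜 E]
  [NormedAddCommGroup F] [NormedSpace 𝕜 F]

theorem dual_graph_eq_zero_of_closedLoop_bounded {x1 x0 : ι → E} {u0 : ι → F}
    {As : E →L[𝕜] E} {Bs : F →L[𝕜] E} (hgen : ∀ k, x1 k = As (x0 k) + Bs (u0 k))
    (K : E →L[𝕜] F) {C : ℝ}
    (hbdd : ∀ (A : E →L[𝕜] E) (B : F →L[𝕜] E),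
      (∀ k, x1 k = A (x0 k) + B (u0 k)) → ‖A + B.comp K‖ ≤ C)
    {φ : StrongDual 𝕜 (E × F)} (hφ : ∀ k, φ (x0 k, u0 k) = 0) (x : E) :
    φ (x, K x) = 0 := by
  set φE := φ.comp (ContinuousLinearMap.inl 𝕜 E F)
  set φF := φ.comp (ContinuousLinearMap.inr 𝕜 E F)
  have hφ_apply : ∀ y v, φ (y, v) = φE y + φF v := fun y v => by
    simp [φE, φF, ← map_add]
  have hpert : ∀ ξ : E, ‖(As + Bs.comp K) + (φE + φF.comp K).smulRight ξ‖ ≤ C := by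
    intro ξ
    have hdata : ∀ k, x1 k = (As + φE.smulRight ξ) (x0 k) + (Bs + φF.smulRight ξ) (u0 k) := by
      intro k
      have h0 : φE (x0 k) + φF (u0 k) = 0 := by rw [← hφ_apply]; exact hφ k
      simp only [add_apply, ContinuousLinearMap.smulRight_apply, hgen k]
      rw [add_add_add_comm, ← add_smul, h0, zero_smul, add_zero]
    convert hbdd _ _ hdata using 2
    ext y
    simp only [add_apply, ContinuousLinearMap.comp_apply,
      ContinuousLinearMap.smulRight_apply, add_smul]
    abel
  have hrank : φE + φF.comp K = 0 := by
    refine ContinuousLinearMap.eq_zero_of_forall_smulRight_eq_zero fun ξ => ?_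
    refine eq_zero_of_forall_norm_add_smul_le (𝕜 := 𝕜) (a := As + Bs.comp K) (C := C) fun t => ?_
    have hscale : t • (φE + φF.comp K).smulRight ξ = (φE + φF.comp K).smulRight (t • ξ) := by
      ext y
      simp only [smul_apply, ContinuousLinearMap.smulRight_apply]
      exact smul_comm _ _ _
    rw [hscale]
    exact hpert (t • ξ)
  rw [hφ_apply]
  exact congrArg (fun f : StrongDual 𝕜 E => f x) hrank

theorem graph_mem_closure_span_of_closedLoop_bounded {x1 x0 : ι → E} {u0 : ι → F}
    {As : E →L[𝕜] E} {Bs : F →L[𝕜] E} (hgen : ∀ k, x1 k = As (x0 k) + Bs (u0 k))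
    (K : E →L[𝕜] F) {C : ℝ}
    (hbdd : ∀ (A : E →L[𝕜] E) (B : F →L[𝕜] E),
      (∀ k, x1 k = A (x0 k) + B (u0 k)) → ‖A + B.comp K‖ ≤ C) (x : E) :
    (x, K x) ∈ (Submodule.span 𝕜 (Set.range fun k => (x0 k, u0 k))).topologicalClosure := by
  by_contra hx
  obtain ⟨φ, hφS, hφx⟩ := Submodule.exists_dual_eq_zero_of_notMem_topologicalClosure hx
  exact hφx <| dual_graph_eq_zero_of_closedLoop_bounded hgen K hbdd
    (fun k => hφS _ (Submodule.subset_span ⟨k, rfl⟩)) x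

end Perturbation

theorem IsSynthesis.apply_single {Y : Type} [NormedAddCommGroup Y] [InnerProductSpace ℂ Y]
    {η : ℕ → Y} {T : l2 →L[ℂ] Y} (hT : IsSynthesis η T) (k : ℕ) :
    T (lp.single 2 k 1) = η k := by
  refine (hT _).unique ?_
  convert hasSum_single k fun j hj => ?_
  · simp
  · simp [hj]

theorem stmt_2_general
    {X : Type} [NormedAddCommGroup X] [InnerProductSpace ℂ X]
    {U : Type} [NormedAddCommGroup U] [InnerProductSpace ℂ U]
    (x1 x0 : ℕ → X) (u0 : ℕ → U)
    (Ξ0 : l2 →L[ℂ] X) (Υ0 : l2 →L[ℂ] U)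
    (hΞ0 : IsSynthesis x0 Ξ0) (hΥ0 : IsSynthesis u0 Υ0)
    (As : X →L[ℂ] X) (Bs : U →L[ℂ] X)
    (hgen : ∀ k : ℕ, x1 k = As (x0 k) + Bs (u0 k))
    (K : X →L[ℂ] U) (M γ : ℝ)
    (hsub : ∀ (A : X →L[ℂ] X) (B : U →L[ℂ] X),
      (∀ k : ℕ, x1 k = A (x0 k) + B (u0 k)) →
      ∀ k : ℕ, ‖(A + B.comp K) ^ k‖ ≤ M * γ ^ k) :
    ∀ x : X, ((x, K x) : X × U) ∈ closure (Set.range fun w : l2 => ((Ξ0 w, Υ0 w) : X × U)) := by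
  intro x
  have hbdd : ∀ (A : X →L[ℂ] X) (B : U →L[ℂ] X),
      (∀ k, x1 k = A (x0 k) + B (u0 k)) → ‖A + B.comp K‖ ≤ M * γ := fun A B hAB => by
    simpa using hsub A B hAB 1
  have hspan : Submodule.span ℂ (Set.range fun k => (x0 k, u0 k)) ≤
      LinearMap.range (Ξ0.prod Υ0 : l2 →ₗ[ℂ] X × U) := by
    rw [Submodule.span_le]
    rintro _ ⟨k, rfl⟩
    exact ⟨lp.single 2 k 1, by simp [hΞ0.apply_single, hΥ0.apply_single]⟩
  exact closure_mono hspan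
    (graph_mem_closure_span_of_closedLoop_bounded hgen K hbdd x)

theorem stmt_2
    {X : Type} [NormedAddCommGroup X] [InnerProductSpace ℂ X] [CompleteSpace X] [Nontrivial X]
    {U : Type} [NormedAddCommGroup U] [InnerProductSpace ℂ U] [CompleteSpace U] [Nontrivial U]
    (x1 x0 : ℕ → X) (u0 : ℕ → U)
    (hx1B : Bessel x1) (hx0B : Bessel x0) (hu0B : Bessel u0)
    (Ξ1 Ξ0 : l2 →L[ℂ] X) (Υ0 : l2 →L[ℂ] U)
    (hΞ1 : IsSynthesis x1 Ξ1) (hΞ0 : IsSynthesis x0 Ξ0) (hΥ0 : IsSynthesis u0 Υ0)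
    (As : X →L[ℂ] X) (Bs : U →L[ℂ] X)
    (hgen : ∀ k : ℕ, x1 k = As (x0 k) + Bs (u0 k))
    (K : X →L[ℂ] U) (M γ : ℝ) (hM : 1 ≤ M) (hγ : 0 < γ)
    (hsub : ∀ (A : X →L[ℂ] X) (B : U →L[ℂ] X),
      (∀ k : ℕ, x1 k = A (x0 k) + B (u0 k)) →
      ∀ k : ℕ, ‖(A + B.comp K) ^ k‖ ≤ M * γ ^ k) :
    ∀ x : X, ((x, K x) : X × U) ∈ closure (Set.range fun w : l2 => ((Ξ0 w, Υ0 w) : X × U)) :=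
  stmt_2_general x1 x0 u0 Ξ0 Υ0 hΞ0 hΥ0 As Bs hgen K M γ hsub
end
end

section
/- Let x1, x0 be Bessel sequences in X and u0 a Bessel sequence in U with synthesis operators Ξ1, Ξ0, Υ0, and suppose the data-generation assumption holds. Fix γ ∈ (0,1). Then the following are equivalent. (i) The data (x1,x0,u0) are informative for stabilization with decay rate γ, and there exists a stabilizing gain K ∈ L(X,U) with decay rate γ such that for every w ∈ ℓ²(ℕ) there exists v ∈ ℓ²(ℕ) with Ξ0 v = Ξ0 w and Υ0 v = K Ξ0 w. (ii) The range of Ξ0 is dense in X, and there exists a linear map Ξ0† : Ran Ξ0 → ℓ²(ℕ) such that (a) Ξ0(Ξ0† x) = x for all x ∈ Ran Ξ0, (b) there exists K' ∈ L(X,U) with K' x = Υ0(Ξ0† x) for all x ∈ Ran Ξ0, and (c) there exists F ∈ L(X) with F x = Ξ1(Ξ0† x) for all x ∈ Ran Ξ0 and F is power stable with decay rate γ. -/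
noncomputable section

/-! Via the synthesis operators, `(A, B)` explains the data exactly when
`Ξ1 = A Ξ0 + B Υ0`. If `Ran Ξ0` were not dense, adding `c ⟪z, ·⟫ z` with `z ⊥ Ran Ξ0` to `A`
would preserve this identity while making `‖A + B K‖` arbitrarily large, contradicting the uniform
bound. The covering condition on `K` yields a linear right inverse `Ξ0†` of `Ξ0` on its range with
`Υ0 Ξ0† = K`, whence `Ξ1 Ξ0† = As + Bs K` there. Conversely, every closed loop `A + B K'` of an
explaining pair agrees with `Ξ1 Ξ0† = F` on the dense set `Ran Ξ0`, hence equals `F`. -/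

namespace IsSynthesis

variable {Y Z : Type} [NormedAddCommGroup Y] [InnerProductSpace ℂ Y]
  [NormedAddCommGroup Z] [InnerProductSpace ℂ Z] {η η' : ℕ → Y} {T T' : l2 →L[ℂ] Y}

theorem unique (hT : IsSynthesis η T) (hT' : IsSynthesis η T') : T = T' :=
  ContinuousLinearMap.ext fun w => (hT w).unique (hT' w)

theorem add (hT : IsSynthesis η T) (hT' : IsSynthesis η' T') :
    IsSynthesis (fun k => η k + η' k) (T + T') := fun w => by
  simpa only [smul_add, add_apply] using (hT w).add (hT' w)

theorem comp (hT : IsSynthesis η T) (A : Y →L[ℂ] Z) :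
    IsSynthesis (fun k => A (η k)) (A.comp T) := fun w => by
  simpa only [map_smul, ContinuousLinearMap.comp_apply] using (hT w).mapL A

theorem apply_single_s3 (hT : IsSynthesis η T) (k : ℕ) : T (lp.single 2 k 1) = η k := by
  refine (hT _).unique ?_
  convert hasSum_ite_eq k (η k) using 2 with j
  split_ifs with hj
  · subst hj; simp
  · simp [Pi.single_eq_of_ne hj]

theorem forall_eq_add_iff_eq_add_comp {X U : Type} [NormedAddCommGroup X]
    [InnerProductSpace ℂ X] [NormedAddCommGroup U] [InnerProductSpace ℂ U]
    {x1 x0 : ℕ → X} {u0 : ℕ → U} {Ξ1 Ξ0 : l2 →L[ℂ] X} {Υ0 : l2 →L[ℂ] U}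
    (hΞ1 : IsSynthesis x1 Ξ1) (hΞ0 : IsSynthesis x0 Ξ0) (hΥ0 : IsSynthesis u0 Υ0)
    (A : X →L[ℂ] X) (B : U →L[ℂ] X) :
    (∀ k, x1 k = A (x0 k) + B (u0 k)) ↔ Ξ1 = A.comp Ξ0 + B.comp Υ0 := by
  refine ⟨fun h => hΞ1.unique ?_, fun h k => ?_⟩
  · simpa only [← h] using (hΞ0.comp A).add (hΥ0.comp B)
  · rw [← hΞ1.apply_single_s3, ← hΞ0.apply_single_s3, ← hΥ0.apply_single_s3, h]
    rfl

end IsSynthesis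

theorem LinearMap.exists_section_range_of_forall_exists {K V W W' : Type*} [DivisionRing K]
    [AddCommGroup V] [Module K V] [AddCommGroup W] [Module K W] [AddCommGroup W'] [Module K W']
    (P : V →ₗ[K] W) (Q : V →ₗ[K] W') (L : W →ₗ[K] W')
    (h : ∀ v, ∃ v', P v' = P v ∧ Q v' = L (P v)) :
    ∃ s : ↥(range P) →ₗ[K] V, ∀ y, P (s y) = y ∧ Q (s y) = L y := by
  obtain ⟨s, hs⟩ := (P.prod Q).rangeRestrict.exists_rightInverse_of_surjective
    (range_eq_top.2 (P.prod Q).surjective_rangeRestrict)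
  have hgraph : ∀ y : ↥(range P), ((y : W), L y) ∈ range (P.prod Q) := by
    rintro ⟨_, v, rfl⟩
    obtain ⟨v', hv'⟩ := h v
    exact ⟨v', Prod.ext hv'.1 hv'.2⟩
  refine ⟨s ∘ₗ (((range P).subtype.prod (L ∘ₗ (range P).subtype)).codRestrict _ hgraph),
    fun y => ?_⟩
  exact Prod.ext_iff.1 (congrArg Subtype.val (LinearMap.congr_fun hs _))

section Operators

variable {𝕜 V X U : Type*} [RCLike 𝕜] [NormedAddCommGroup V] [NormedSpace 𝕜 V]
  [NormedAddCommGroup X] [NormedAddCommGroup U] [NormedSpace 𝕜 U]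

theorem denseRange_of_forall_norm_add_le [InnerProductSpace 𝕜 X] [CompleteSpace X]
    {Ξ0 : V →L[𝕜] X} (G : X →L[𝕜] X) (R : ℝ)
    (h : ∀ Δ : X →L[𝕜] X, Δ.comp Ξ0 = 0 → ‖G + Δ‖ ≤ R) : DenseRange Ξ0 := by
  by_contra hnd
  have hperp : (LinearMap.range (Ξ0 : V →ₗ[𝕜] X))ᗮ ≠ ⊥ := by
    rwa [Ne, ← Submodule.topologicalClosure_eq_top_iff,
      ← Submodule.dense_iff_topologicalClosure_eq_top, LinearMap.coe_range]
  obtain ⟨z, hz, hz0⟩ := (Submodule.ne_bot_iff _).1 hperp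
  set D : X →L[𝕜] X := (innerSL 𝕜 z).smulRight z
  have hD : D.comp Ξ0 = 0 := by
    ext v
    have hzv : inner 𝕜 z (Ξ0 v) = 0 :=
      Submodule.inner_left_of_mem_orthogonal (LinearMap.mem_range_self _ v) hz
    simp [D, hzv]
  have hDpos : 0 < ‖D‖ := by
    rw [ContinuousLinearMap.norm_smulRight_apply, innerSL_apply_norm]
    positivity
  obtain ⟨n, hn⟩ := exists_nat_gt ((R + ‖G‖) / ‖D‖)
  have hbound := h ((n : 𝕜) • D) (by rw [ContinuousLinearMap.smul_comp, hD, smul_zero])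
  have hD_le : (n : ℝ) * ‖D‖ ≤ ‖G + (n : 𝕜) • D‖ + ‖G‖ := by
    rw [← RCLike.norm_natCast (K := 𝕜) n, ← norm_smul]
    simpa using norm_sub_le (G + (n : 𝕜) • D) G
  rw [div_lt_iff₀ hDpos] at hn
  linarith

theorem add_comp_eq_of_denseRange [NormedSpace 𝕜 X] {Ξ1 Ξ0 : V →L[𝕜] X} {Υ0 : V →L[𝕜] U}
    (hdense : DenseRange Ξ0) {Ξd : ↥(LinearMap.range (Ξ0 : V →ₗ[𝕜] X)) →ₗ[𝕜] V}
    (hsec : ∀ x : ↥(LinearMap.range (Ξ0 : V →ₗ[𝕜] X)), Ξ0 (Ξd x) = x)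
    {K : X →L[𝕜] U} (hK : ∀ x : ↥(LinearMap.range (Ξ0 : V →ₗ[𝕜] X)), K x = Υ0 (Ξd x))
    {F : X →L[𝕜] X} (hF : ∀ x : ↥(LinearMap.range (Ξ0 : V →ₗ[𝕜] X)), F x = Ξ1 (Ξd x))
    {A : X →L[𝕜] X} {B : U →L[𝕜] X}
    (h : Ξ1 = A.comp Ξ0 + B.comp Υ0) : A + B.comp K = F := by
  refine DFunLike.coe_injective <|
    Continuous.ext_on hdense (map_continuous _) (map_continuous _) ?_
  rintro _ ⟨w, rfl⟩
  set x : ↥(LinearMap.range (Ξ0 : V →ₗ[𝕜] X)) := ⟨Ξ0 w, w, rfl⟩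
  calc (A + B.comp K) (x : X) = A (Ξ0 (Ξd x)) + B (Υ0 (Ξd x)) := by simp [hsec, hK]
    _ = F x := by simp [hF, h]

end Operators

theorem stmt_3_general
    {X : Type} [NormedAddCommGroup X] [InnerProductSpace ℂ X] [CompleteSpace X]
    {U : Type} [NormedAddCommGroup U] [InnerProductSpace ℂ U]
    (x1 x0 : ℕ → X) (u0 : ℕ → U)
    (Ξ1 Ξ0 : l2 →L[ℂ] X) (Υ0 : l2 →L[ℂ] U)
    (hΞ1 : IsSynthesis x1 Ξ1) (hΞ0 : IsSynthesis x0 Ξ0) (hΥ0 : IsSynthesis u0 Υ0)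
    (As : X →L[ℂ] X) (Bs : U →L[ℂ] X)
    (hgen : ∀ k : ℕ, x1 k = As (x0 k) + Bs (u0 k))
    (γ : ℝ) :
    -- (i)
    ((∃ (K : X →L[ℂ] U) (M : ℝ), 1 ≤ M ∧ ∀ (A : X →L[ℂ] X) (B : U →L[ℂ] X),
          (∀ k : ℕ, x1 k = A (x0 k) + B (u0 k)) →
          ∀ k : ℕ, ‖(A + B.comp K) ^ k‖ ≤ M * γ ^ k) ∧
      (∃ K : X →L[ℂ] U,
        (∃ M : ℝ, 1 ≤ M ∧ ∀ (A : X →L[ℂ] X) (B : U →L[ℂ] X),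
            (∀ k : ℕ, x1 k = A (x0 k) + B (u0 k)) →
            ∀ k : ℕ, ‖(A + B.comp K) ^ k‖ ≤ M * γ ^ k) ∧
        ∀ w : l2, ∃ v : l2, Ξ0 v = Ξ0 w ∧ Υ0 v = K (Ξ0 w)))
    ↔
    -- (ii)
    (DenseRange ⇑Ξ0 ∧
      ∃ Ξd : ↥(LinearMap.range (Ξ0 : l2 →ₗ[ℂ] X)) →ₗ[ℂ] l2,
        (∀ x : ↥(LinearMap.range (Ξ0 : l2 →ₗ[ℂ] X)), Ξ0 (Ξd x) = (x : X)) ∧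
        (∃ K' : X →L[ℂ] U, ∀ x : ↥(LinearMap.range (Ξ0 : l2 →ₗ[ℂ] X)), K' (x : X) = Υ0 (Ξd x)) ∧
        (∃ F : X →L[ℂ] X, (∀ x : ↥(LinearMap.range (Ξ0 : l2 →ₗ[ℂ] X)), F (x : X) = Ξ1 (Ξd x)) ∧
          ∃ M : ℝ, 1 ≤ M ∧ ∀ k : ℕ, ‖F ^ k‖ ≤ M * γ ^ k)) := by
  simp only [IsSynthesis.forall_eq_add_iff_eq_add_comp hΞ1 hΞ0 hΥ0] at hgen ⊢
  constructor
  · rintro ⟨-, K, ⟨M, hM1, hbd⟩, hcov⟩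
    have hdense : DenseRange Ξ0 := by
      refine denseRange_of_forall_norm_add_le (As + Bs.comp K) (M * γ) fun Δ hΔ => ?_
      have hcons : Ξ1 = (As + Δ).comp Ξ0 + Bs.comp Υ0 := by
        rw [ContinuousLinearMap.add_comp, hΔ, add_zero, hgen]
      simpa only [pow_one, add_right_comm] using hbd (As + Δ) Bs hcons 1
    obtain ⟨Ξd, hΞd⟩ := LinearMap.exists_section_range_of_forall_exists
      (Ξ0 : l2 →ₗ[ℂ] X) (Υ0 : l2 →ₗ[ℂ] U) (K : X →ₗ[ℂ] U) hcov
    refine ⟨hdense, Ξd, fun x => (hΞd x).1, ⟨K, fun x => (hΞd x).2.symm⟩,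
      As + Bs.comp K, fun x => ?_, M, hM1, hbd As Bs hgen⟩
    obtain ⟨hΞ0d, hΥ0d⟩ := hΞd x
    simp only [hgen, add_apply, ContinuousLinearMap.comp_apply]
    exact congr(As $hΞ0d.symm + Bs $hΥ0d.symm)
  · rintro ⟨hdense, Ξd, hsec, ⟨K, hK⟩, F, hF, M, hM1, hFbd⟩
    have hbd : ∀ (A : X →L[ℂ] X) (B : U →L[ℂ] X), Ξ1 = A.comp Ξ0 + B.comp Υ0 →
        ∀ k : ℕ, ‖(A + B.comp K) ^ k‖ ≤ M * γ ^ k := fun A B h k => by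
      rw [add_comp_eq_of_denseRange hdense hsec hK hF h]
      exact hFbd k
    exact ⟨⟨K, M, hM1, hbd⟩, K, ⟨M, hM1, hbd⟩,
      fun w => ⟨Ξd ⟨Ξ0 w, w, rfl⟩, hsec _, (hK _).symm⟩⟩

theorem stmt_3
    {X : Type} [NormedAddCommGroup X] [InnerProductSpace ℂ X] [CompleteSpace X] [Nontrivial X]
    {U : Type} [NormedAddCommGroup U] [InnerProductSpace ℂ U] [CompleteSpace U] [Nontrivial U]
    (x1 x0 : ℕ → X) (u0 : ℕ → U)
    (hx1B : Bessel x1) (hx0B : Bessel x0) (hu0B : Bessel u0)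
    (Ξ1 Ξ0 : l2 →L[ℂ] X) (Υ0 : l2 →L[ℂ] U)
    (hΞ1 : IsSynthesis x1 Ξ1) (hΞ0 : IsSynthesis x0 Ξ0) (hΥ0 : IsSynthesis u0 Υ0)
    (As : X →L[ℂ] X) (Bs : U →L[ℂ] X)
    (hgen : ∀ k : ℕ, x1 k = As (x0 k) + Bs (u0 k))
    (γ : ℝ) (hγ0 : 0 < γ) (hγ1 : γ < 1) :
    -- (i)
    ((∃ (K : X →L[ℂ] U) (M : ℝ), 1 ≤ M ∧ ∀ (A : X →L[ℂ] X) (B : U →L[ℂ] X),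
          (∀ k : ℕ, x1 k = A (x0 k) + B (u0 k)) →
          ∀ k : ℕ, ‖(A + B.comp K) ^ k‖ ≤ M * γ ^ k) ∧
      (∃ K : X →L[ℂ] U,
        (∃ M : ℝ, 1 ≤ M ∧ ∀ (A : X →L[ℂ] X) (B : U →L[ℂ] X),
            (∀ k : ℕ, x1 k = A (x0 k) + B (u0 k)) →
            ∀ k : ℕ, ‖(A + B.comp K) ^ k‖ ≤ M * γ ^ k) ∧
        ∀ w : l2, ∃ v : l2, Ξ0 v = Ξ0 w ∧ Υ0 v = K (Ξ0 w)))
    ↔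
    -- (ii)
    (DenseRange ⇑Ξ0 ∧
      ∃ Ξd : ↥(LinearMap.range (Ξ0 : l2 →ₗ[ℂ] X)) →ₗ[ℂ] l2,
        (∀ x : ↥(LinearMap.range (Ξ0 : l2 →ₗ[ℂ] X)), Ξ0 (Ξd x) = (x : X)) ∧
        (∃ K' : X →L[ℂ] U, ∀ x : ↥(LinearMap.range (Ξ0 : l2 →ₗ[ℂ] X)), K' (x : X) = Υ0 (Ξd x)) ∧
        (∃ F : X →L[ℂ] X, (∀ x : ↥(LinearMap.range (Ξ0 : l2 →ₗ[ℂ] X)), F (x : X) = Ξ1 (Ξd x)) ∧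
          ∃ M : ℝ, 1 ≤ M ∧ ∀ k : ℕ, ‖F ^ k‖ ≤ M * γ ^ k)) :=
  stmt_3_general x1 x0 u0 Ξ1 Ξ0 Υ0 hΞ1 hΞ0 hΥ0 As Bs hgen γ
end
end

section
/- Let Ξ0 ∈ L(ℓ²(ℕ),X), Υ0 ∈ L(ℓ²(ℕ),U) and K ∈ L(X,U). Define G ∈ L(X, X×U) by Gx = (x, Kx) and H ∈ L(ℓ²(ℕ), X×U) by Hw = (Ξ0 w, Υ0 w). Then Ran(G∘Ξ0) ⊆ Ran H if and only if Ran(KΞ0 − Υ0) ⊆ Υ0(Ker Ξ0). -/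
noncomputable section

theorem stmt_5
    {X : Type} [NormedAddCommGroup X] [InnerProductSpace ℂ X] [CompleteSpace X] [Nontrivial X]
    {U : Type} [NormedAddCommGroup U] [InnerProductSpace ℂ U] [CompleteSpace U] [Nontrivial U]
    (Ξ0 : l2 →L[ℂ] X) (Υ0 : l2 →L[ℂ] U) (K : X →L[ℂ] U) :
    (Set.range (fun w : l2 => ((Ξ0 w, K (Ξ0 w)) : X × U))
        ⊆ Set.range (fun w : l2 => ((Ξ0 w, Υ0 w) : X × U)))
      ↔ (Set.range (fun w : l2 => K (Ξ0 w) - Υ0 w) ⊆ Υ0 '' {w : l2 | Ξ0 w = 0}) := by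
  constructor
  · intro h y hy
    obtain ⟨w, rfl⟩ := hy
    obtain ⟨v, hv⟩ := h (Set.mem_range_self w)
    have h1 : Ξ0 v = Ξ0 w := congrArg Prod.fst hv
    have h2 : Υ0 v = K (Ξ0 w) := congrArg Prod.snd hv
    refine ⟨v - w, ?_, ?_⟩
    · simp [Set.mem_setOf_eq, map_sub, h1]
    · simp [map_sub, h2]
  · intro h y hy
    obtain ⟨w, rfl⟩ := hy
    obtain ⟨u, hu1, hu2⟩ := h (Set.mem_range_self w)
    refine ⟨w + u, ?_⟩
    simp only [Set.mem_setOf_eq] at hu1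
    simp [map_add, hu1, hu2]
end
end

section
/- Let Ξ0 ∈ L(ℓ²(ℕ),X), Υ0 ∈ L(ℓ²(ℕ),U) and K ∈ L(X,U), and define G ∈ L(X, X×U) by Gx = (x, Kx) and H ∈ L(ℓ²(ℕ), X×U) by Hw = (Ξ0 w, Υ0 w). Suppose Ran(G∘Ξ0) is contained in the closure of Ran H. If dim(Ran Υ0) < ∞ and Υ0(Ker Ξ0) = Ran Υ0, then Ran(G∘Ξ0) ⊆ Ran H. In particular, if dim U = 1 and Ker Ξ0 is not contained in Ker Υ0, then Ran(G∘Ξ0) ⊆ Ran H. -/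
noncomputable section

/-! Since `Υ0 (Ker Ξ0) = Ran Υ0`, the second component of `(Ξ0 w, Υ0 w)` can be moved anywhere
in `Ran Υ0` without moving the first, so `Ran H` is the full product of `Ran Ξ0` with `Ran Υ0`.
The closure hypothesis puts `K (Ξ0 w)` in the closure of `Ran Υ0`, which is closed when it is
finite-dimensional. If `dim U = 1`, the nonzero subspace `Υ0 (Ker Ξ0)` is all of `U`. -/

theorem snd_mem_range_of_mem_closure_range_prod {ι β γ : Type*}
    [TopologicalSpace β] [TopologicalSpace γ] {f : ι → β} {g : ι → γ}
    (hg : IsClosed (Set.range g)) {p : β × γ}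
    (hp : p ∈ closure (Set.range fun i => (f i, g i))) :
    p.2 ∈ Set.range g :=
  closure_minimal (by rintro _ ⟨i, rfl⟩; exact ⟨i, rfl⟩) (hg.preimage continuous_snd) hp

theorem mem_range_prod_of_image_ker_eq_range {E F V 𝓐 𝓑 : Type*}
    [AddCommGroup E] [AddCommGroup F] [AddCommGroup V]
    [FunLike 𝓐 E F] [AddMonoidHomClass 𝓐 E F] [FunLike 𝓑 E V] [AddMonoidHomClass 𝓑 E V]
    {A : 𝓐} {B : 𝓑} (hB : B '' {u | A u = 0} = Set.range B) (w : E) {y : V}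
    (hy : y ∈ Set.range B) :
    (A w, y) ∈ Set.range fun u => (A u, B u) := by
  obtain ⟨u, hAu : A u = 0, hBu⟩ : y - B w ∈ B '' {u | A u = 0} := by
    obtain ⟨v, rfl⟩ := hy
    exact hB ▸ ⟨v - w, map_sub B v w⟩
  refine ⟨w + u, ?_⟩
  simp only [map_add, hAu, add_zero, hBu, add_sub_cancel]

theorem image_ker_eq_range_of_finrank_eq_one {K E F V : Type*} [DivisionRing K]
    [AddCommGroup E] [Module K E] [AddCommGroup F] [Module K F] [AddCommGroup V] [Module K V]
    (hV : Module.finrank K V = 1) {A : E →ₗ[K] F} {B : E →ₗ[K] V}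
    (hAB : ¬ LinearMap.ker A ≤ LinearMap.ker B) :
    B '' {u | A u = 0} = Set.range B := by
  have : IsSimpleOrder (Submodule K V) := is_simple_module_of_finrank_eq_one hV
  have htop : (LinearMap.ker A).map B = ⊤ :=
    (eq_bot_or_eq_top _).resolve_left (mt LinearMap.le_ker_iff_map.mpr hAB)
  refine (Set.image_subset_range _ _).antisymm fun y _ => ?_
  obtain ⟨u, hu, rfl⟩ : y ∈ (LinearMap.ker A).map B := htop ▸ Submodule.mem_top
  exact ⟨u, hu, rfl⟩

theorem stmt_6_general
    {X : Type} [NormedAddCommGroup X] [InnerProductSpace ℂ X]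
    {U : Type} [NormedAddCommGroup U] [InnerProductSpace ℂ U]
    (Ξ0 : l2 →L[ℂ] X) (Υ0 : l2 →L[ℂ] U) (K : X →L[ℂ] U)
    (hclos : Set.range (fun w : l2 => ((Ξ0 w, K (Ξ0 w)) : X × U))
        ⊆ closure (Set.range (fun w : l2 => ((Ξ0 w, Υ0 w) : X × U)))) :
    ((FiniteDimensional ℂ ↥(LinearMap.range (Υ0 : l2 →ₗ[ℂ] U)) ∧ Υ0 '' {w : l2 | Ξ0 w = 0} = Set.range Υ0) →
        Set.range (fun w : l2 => ((Ξ0 w, K (Ξ0 w)) : X × U))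
          ⊆ Set.range (fun w : l2 => ((Ξ0 w, Υ0 w) : X × U))) ∧
    ((Module.finrank ℂ U = 1 ∧ ¬ (LinearMap.ker (Ξ0 : l2 →ₗ[ℂ] X) ≤ LinearMap.ker (Υ0 : l2 →ₗ[ℂ] U))) →
        Set.range (fun w : l2 => ((Ξ0 w, K (Ξ0 w)) : X × U))
          ⊆ Set.range (fun w : l2 => ((Ξ0 w, Υ0 w) : X × U))) := by
  have finiteDimensional_case : (FiniteDimensional ℂ ↥(LinearMap.range (Υ0 : l2 →ₗ[ℂ] U)) ∧
        Υ0 '' {w : l2 | Ξ0 w = 0} = Set.range Υ0) →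
      Set.range (fun w : l2 => ((Ξ0 w, K (Ξ0 w)) : X × U))
        ⊆ Set.range (fun w : l2 => ((Ξ0 w, Υ0 w) : X × U)) := by
    rintro ⟨hfd, himg⟩ _ ⟨w, rfl⟩
    have hclosed : IsClosed (Set.range Υ0) := by
      simpa only [LinearMap.coe_range, ContinuousLinearMap.coe_coe] using
        (LinearMap.range (Υ0 : l2 →ₗ[ℂ] U)).closed_of_finiteDimensional
    exact mem_range_prod_of_image_ker_eq_range himg w
      (snd_mem_range_of_mem_closure_range_prod hclosed (hclos ⟨w, rfl⟩))
  refine ⟨finiteDimensional_case, fun ⟨hU, hker⟩ => finiteDimensional_case ⟨?_, ?_⟩⟩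
  · have : FiniteDimensional ℂ U := .of_finrank_eq_succ hU
    infer_instance
  · exact image_ker_eq_range_of_finrank_eq_one hU hker

theorem stmt_6
    {X : Type} [NormedAddCommGroup X] [InnerProductSpace ℂ X] [CompleteSpace X] [Nontrivial X]
    {U : Type} [NormedAddCommGroup U] [InnerProductSpace ℂ U] [CompleteSpace U] [Nontrivial U]
    (Ξ0 : l2 →L[ℂ] X) (Υ0 : l2 →L[ℂ] U) (K : X →L[ℂ] U)
    (hclos : Set.range (fun w : l2 => ((Ξ0 w, K (Ξ0 w)) : X × U))
        ⊆ closure (Set.range (fun w : l2 => ((Ξ0 w, Υ0 w) : X × U)))) :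
    ((FiniteDimensional ℂ ↥(LinearMap.range (Υ0 : l2 →ₗ[ℂ] U)) ∧ Υ0 '' {w : l2 | Ξ0 w = 0} = Set.range Υ0) →
        Set.range (fun w : l2 => ((Ξ0 w, K (Ξ0 w)) : X × U))
          ⊆ Set.range (fun w : l2 => ((Ξ0 w, Υ0 w) : X × U))) ∧
    ((Module.finrank ℂ U = 1 ∧ ¬ (LinearMap.ker (Ξ0 : l2 →ₗ[ℂ] X) ≤ LinearMap.ker (Υ0 : l2 →ₗ[ℂ] U))) →
        Set.range (fun w : l2 => ((Ξ0 w, K (Ξ0 w)) : X × U))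
          ⊆ Set.range (fun w : l2 => ((Ξ0 w, Υ0 w) : X × U))) :=
  stmt_6_general Ξ0 Υ0 K hclos
end
end

section
/- Suppose the finite data (x1,x0,u0) of length N satisfy the finite data-generation assumption for the true system (A_s,B_s) ∈ A(X)×L(U,X). Let Π ∈ L(X) be the projection onto X₊ along X₋. Then for A₊ ∈ L(X₊) and B₊ ∈ L(U,X₊) the following are equivalent: (i) there exists (A,B) ∈ Σ_is,A such that A₊ = Π A|_{X₊} and B₊ = Π B; (ii) Π x1(k) = A₊ Π x0(k) + B₊ u0(k) for all k = 1,…,N. -/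
noncomputable section
open ContinuousLinearMap
open scoped ENNReal

/-- `A ∈ 𝒜(X)`: `A` leaves `Xm` invariant and the spectral radius of the
restriction `A|_{Xm}` is at most `γm`. -/
def MemAX {X : Type} [NormedAddCommGroup X] [InnerProductSpace ℂ X]
    (Xm : Submodule ℂ X) (γm : ℝ) (A : X →L[ℂ] X) : Prop :=
  ∃ Am : Xm →L[ℂ] Xm, (∀ x : Xm, (Am x : X) = A (x : X)) ∧
    spectralRadius ℂ Am ≤ ENNReal.ofReal γm

theorem stmt_11
    {X : Type} [NormedAddCommGroup X] [InnerProductSpace ℂ X] [CompleteSpace X] [Nontrivial X]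
    {U : Type} [NormedAddCommGroup U] [InnerProductSpace ℂ U] [CompleteSpace U] [Nontrivial U]
    (Xp Xm : Submodule ℂ X) (hXp : IsClosed (Xp : Set X)) (hXm : IsClosed (Xm : Set X))
    (hinf : Xp ⊓ Xm = ⊥) (hsup : Xp ⊔ Xm = ⊤) [FiniteDimensional ℂ Xp]
    (γm : ℝ) (hγm0 : 0 < γm) (hγm1 : γm < 1)
    -- Π̃ : the projection onto X₊ along X₋, with codomain X₊
    (Pt : X →L[ℂ] Xp) (hPp : ∀ x ∈ Xp, (Pt x : X) = x) (hPm : ∀ x ∈ Xm, Pt x = 0)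
    (N : ℕ) (x1 x0 : Fin N → X) (u0 : Fin N → U)
    (As : X →L[ℂ] X) (Bs : U →L[ℂ] X) (hAs : MemAX Xm γm As)
    (hgen : ∀ k : Fin N, x1 k = As (x0 k) + Bs (u0 k))
    (Ap : Xp →L[ℂ] Xp) (Bp : U →L[ℂ] Xp) :
    -- (i)
    (∃ (A : X →L[ℂ] X) (B : U →L[ℂ] X), MemAX Xm γm A ∧
        (∀ k : Fin N, x1 k = A (x0 k) + B (u0 k)) ∧
        (∀ x : Xp, Ap x = Pt (A (x : X))) ∧ (∀ u : U, Bp u = Pt (B u)))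
    ↔
    -- (ii)
    (∀ k : Fin N, Pt (x1 k) = Ap (Pt (x0 k)) + Bp (u0 k)) := by
  have hPtι : ∀ p : Xp, Pt (p : X) = p := fun p => Subtype.ext (hPp p p.2)
  constructor
  · rintro ⟨A, B, ⟨Am, hAm, hsr⟩, hdata, hA, hB⟩ k
    obtain ⟨p, hp, m, hm, hpm⟩ := Submodule.mem_sup.mp
      (show x0 k ∈ Xp ⊔ Xm by rw [hsup]; trivial)
    have hAmX : A m ∈ Xm := by rw [← hAm ⟨m, hm⟩]; exact (Am ⟨m, hm⟩).2
    have h1 : Pt (x0 k) = Pt p := by rw [← hpm, map_add, hPm m hm, add_zero]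
    have h2 : Pt (A (x0 k)) = Pt (A p) := by
      rw [← hpm, map_add, map_add, hPm _ hAmX, add_zero]
    have h3 : Ap (Pt p) = Pt (A p) := by
      have hp' : Pt p = ⟨p, hp⟩ := hPtι ⟨p, hp⟩
      rw [hp']; exact hA ⟨p, hp⟩
    rw [hdata k, map_add, h2, h1, ← h3, ← hB (u0 k)]
  · intro hii
    obtain ⟨Am, hAm, hsr⟩ := hAs
    set ι : Xp →L[ℂ] X := Xp.subtypeL with hι
    set A : X →L[ℂ] X :=
      ι.comp (Ap.comp Pt) + (ContinuousLinearMap.id ℂ X - ι.comp Pt).comp As with hAdef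
    set B : U →L[ℂ] X :=
      ι.comp Bp + (ContinuousLinearMap.id ℂ X - ι.comp Pt).comp Bs with hBdef
    have hAsXm : ∀ m : Xm, As (m : X) ∈ Xm := fun m => by
      rw [← hAm m]; exact (Am m).2
    have hAval : ∀ x : X, A x = ((Ap (Pt x) : X)) + (As x - ((Pt (As x) : X))) := fun x => by
      simp [hAdef, hι]
    have hBval : ∀ u : U, B u = ((Bp u : X)) + (Bs u - ((Pt (Bs u) : X))) := fun u => by
      simp [hBdef, hι]
    refine ⟨A, B, ⟨Am, fun m => ?_, hsr⟩, fun k => ?_, fun x => ?_, fun u => ?_⟩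
    · rw [hAval m, hPm _ m.2, hPm _ (hAsXm m), hAm m]
      simp
    · have hk' : Pt (As (x0 k)) + Pt (Bs (u0 k)) = Ap (Pt (x0 k)) + Bp (u0 k) := by
        rw [← map_add, ← hgen k]; exact hii k
      have hc : ((Pt (As (x0 k)) : X)) + ((Pt (Bs (u0 k)) : X))
          = ((Ap (Pt (x0 k)) : X)) + ((Bp (u0 k)) : X) := by
        have := congrArg (fun z : Xp => (z : X)) hk'
        simpa using this
      rw [hgen k, hAval, hBval, ← sub_eq_zero]
      rw [show As (x0 k) + Bs (u0 k)
            - (((Ap (Pt (x0 k)) : X)) + (As (x0 k) - ((Pt (As (x0 k)) : X)))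
              + (((Bp (u0 k)) : X) + (Bs (u0 k) - ((Pt (Bs (u0 k)) : X)))))
          = (((Pt (As (x0 k)) : X)) + ((Pt (Bs (u0 k)) : X)))
            - (((Ap (Pt (x0 k)) : X)) + ((Bp (u0 k)) : X)) from by abel]
      exact sub_eq_zero.mpr hc
    · simp only [hAval, map_add, map_sub, hPtι, sub_self, add_zero]
    · simp only [hBval, map_add, map_sub, hPtι, sub_self, add_zero]
end
end

section
/- Suppose the finite data (x1,x0,u0) of length N satisfy the finite data-generation assumption for the true system (A_s,B_s) ∈ A(X)×L(U,X). Assume K ∈ K(X,U) satisfies Σ_is,A ⊆ Σ_{K,γ,A} for some γ ≥ γ₋, and let K₊ := K|_{X₊}. Then for every x ∈ X₊, the vector (x, K₊ x) ∈ X₊×U lies in the range of the operator ℂ^N → X₊×U, w ↦ (Ξ₀₊ w, Υ0 w). -/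
/-!
If `(x, K x)` were not in the span of the data vectors `(Π̃ x0 k, u0 k)`, Hahn–Banach would give a
functional `ψ (z, u) = Φ (Π̃ z, u)` vanishing on the data and on `X₋ × {0}` with `ψ (x, K x) = 1`.
Perturbing the true system by the rank-one terms `ψ (·, 0) • d` and `ψ (0, ·) • d` keeps it in
`Σ_is,𝒜`, and the choice `d = μ x - (A_s + B_s K) x` makes `x` an eigenvector of the perturbed
closed loop with eigenvalue `μ = |γ| + 1`, which is incompatible with `‖(A + B K)^k‖ ≤ M γ^k`.
-/

noncomputable section
open ContinuousLinearMap
open scoped ENNReal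

theorem Submodule.exists_dual_eq_zero_of_notMem {𝕜 E : Type*} [RCLike 𝕜] [NormedAddCommGroup E]
    [NormedSpace 𝕜 E] (V : Submodule 𝕜 E) [FiniteDimensional 𝕜 V] {e : E} (he : e ∉ V) :
    ∃ f : StrongDual 𝕜 E, (∀ v ∈ V, f v = 0) ∧ f e = 1 := by
  have : IsClosed (V : Set E) := V.closed_of_finiteDimensional
  obtain ⟨f, hf⟩ := SeparatingDual.exists_eq_one (R := 𝕜) (x := V.mkQ e)
    (by simpa [Submodule.Quotient.mk_eq_zero] using he)
  exact ⟨f.comp V.mkQL, fun v hv => by simp [(Submodule.Quotient.mk_eq_zero V).2 hv], hf⟩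

open Filter Topology in
theorem le_of_forall_pow_le_mul_pow {a b C : ℝ} (hb : 0 ≤ b) (h : ∀ n : ℕ, a ^ n ≤ C * b ^ n) :
    a ≤ b := by
  by_contra! hba
  have ha : 0 < a := hb.trans_lt hba
  have hlim : Tendsto (fun n : ℕ => C * (b / a) ^ n) atTop (𝓝 0) := by
    simpa using (tendsto_pow_atTop_nhds_zero_of_lt_one (div_nonneg hb ha.le)
      ((div_lt_one ha).2 hba)).const_mul C
  obtain ⟨n, hn⟩ := (hlim.eventually (gt_mem_nhds one_pos)).exists
  have := h n
  rw [div_pow, mul_div_assoc', div_lt_one (pow_pos ha n)] at hn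
  linarith

namespace ContinuousLinearMap

variable {𝕜 E : Type*} [NontriviallyNormedField 𝕜] [NormedAddCommGroup E] [NormedSpace 𝕜 E]

theorem pow_apply_of_apply_eq_smul {S : E →L[𝕜] E} {x : E} {μ : 𝕜} (hSx : S x = μ • x) (n : ℕ) :
    (S ^ n) x = μ ^ n • x := by
  induction n with
  | zero => simp
  | succ n ih => rw [pow_succ', mul_apply_eq_comp, ih, map_smul, hSx, smul_smul, pow_succ]

theorem norm_le_abs_of_apply_eq_smul {S : E →L[𝕜] E} {x : E} {μ : 𝕜} (hx : x ≠ 0)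
    (hSx : S x = μ • x) {M γ : ℝ} (hS : ∀ n : ℕ, ‖S ^ n‖ ≤ M * γ ^ n) : ‖μ‖ ≤ |γ| := by
  refine le_of_forall_pow_le_mul_pow (abs_nonneg γ) (C := |M|) fun n => ?_
  have hx' : 0 < ‖x‖ := norm_pos_iff.2 hx
  refine le_of_mul_le_mul_right ?_ hx'
  calc ‖μ‖ ^ n * ‖x‖ = ‖(S ^ n) x‖ := by rw [pow_apply_of_apply_eq_smul hSx, norm_smul, norm_pow]
    _ ≤ ‖S ^ n‖ * ‖x‖ := le_opNorm _ _
    _ ≤ M * γ ^ n * ‖x‖ := by gcongr; exact hS n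
    _ ≤ |M| * |γ| ^ n * ‖x‖ := by
      rw [← abs_pow, ← abs_mul]
      exact mul_le_mul_of_nonneg_right (le_abs_self _) hx'.le

variable {U : Type*} [NormedAddCommGroup U] [NormedSpace 𝕜 U]

theorem add_smulRight_apply_add_add_smulRight_apply (A : E →L[𝕜] E) (B : U →L[𝕜] E)
    (ψ : E × U →L[𝕜] 𝕜) (d : E) (z : E) (u : U) :
    (A + (ψ ∘L inl 𝕜 E U).smulRight d) z + (B + (ψ ∘L inr 𝕜 E U).smulRight d) u =
      A z + B u + ψ (z, u) • d := by
  have : ψ (z, u) = ψ (z, 0) + ψ (0, u) := by rw [← map_add, Prod.mk_add_mk, add_zero, zero_add]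
  simp only [add_apply, smulRight_apply, comp_apply, inl_apply, inr_apply, this, add_smul]
  abel

end ContinuousLinearMap

theorem MemAX.add_smulRight {X : Type} [NormedAddCommGroup X] [InnerProductSpace ℂ X]
    {Xm : Submodule ℂ X} {γm : ℝ} {A : X →L[ℂ] X} (hA : MemAX Xm γm A) {f : X →L[ℂ] ℂ}
    (hf : ∀ z ∈ Xm, f z = 0) (d : X) : MemAX Xm γm (A + f.smulRight d) := by
  obtain ⟨Am, hAm, hr⟩ := hA
  exact ⟨Am, fun z => by simp [hAm z, hf z z.2], hr⟩

theorem stmt_12_general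
    {X : Type} [NormedAddCommGroup X] [InnerProductSpace ℂ X]
    {U : Type} [NormedAddCommGroup U] [InnerProductSpace ℂ U]
    (Xp Xm : Submodule ℂ X)
    (γm : ℝ)
    -- Π̃ : the projection onto X₊ along X₋, with codomain X₊
    (Pt : X →L[ℂ] Xp) (hPp : ∀ x ∈ Xp, (Pt x : X) = x) (hPm : ∀ x ∈ Xm, Pt x = 0)
    (N : ℕ) (x1 x0 : Fin N → X) (u0 : Fin N → U)
    (As : X →L[ℂ] X) (Bs : U →L[ℂ] X) (hAs : MemAX Xm γm As)
    (hgen : ∀ k : Fin N, x1 k = As (x0 k) + Bs (u0 k))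
    -- K ∈ 𝒦(X,U) with Σ_is,𝒜 ⊆ Σ_{K,γ,𝒜} for some γ ≥ γ₋
    (K : X →L[ℂ] U)
    (γ : ℝ)
    (hsub : ∀ (A : X →L[ℂ] X) (B : U →L[ℂ] X),
      MemAX Xm γm A → (∀ k : Fin N, x1 k = A (x0 k) + B (u0 k)) →
      ∃ M : ℝ, 1 ≤ M ∧ ∀ k : ℕ, ‖(A + B.comp K) ^ k‖ ≤ M * γ ^ k) :
    -- conclusion: (x, K₊ x) ∈ Ran [Ξ₀₊ ; Υ₀] for every x ∈ X₊
    ∀ x : Xp, ∃ w : Fin N → ℂ,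
      (∑ k : Fin N, w k • Pt (x0 k)) = x ∧ (∑ k : Fin N, w k • u0 k) = K (x : X) := by
  intro x
  set v : Fin N → Xp × U := fun k => (Pt (x0 k), u0 k)
  suffices hspan : (x, K x) ∈ Submodule.span ℂ (Set.range v) by
    obtain ⟨w, hw⟩ := (Submodule.mem_span_range_iff_exists_fun ℂ).1 hspan
    exact ⟨w, by simpa [v, Prod.fst_sum] using congrArg Prod.fst hw,
      by simpa [v, Prod.snd_sum] using congrArg Prod.snd hw⟩
  by_contra hx
  have hx0 : (x : X) ≠ 0 := fun h => hx <| by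
    rw [show x = 0 from Subtype.ext h, ZeroMemClass.coe_zero, map_zero]
    exact zero_mem _
  have := FiniteDimensional.span_of_finite ℂ (Set.finite_range v)
  obtain ⟨Φ, hΦv, hΦx⟩ := (Submodule.span ℂ (Set.range v)).exists_dual_eq_zero_of_notMem hx
  set ψ : X × U →L[ℂ] ℂ := Φ ∘L Pt.prodMap (ContinuousLinearMap.id ℂ U)
  set μ : ℂ := ((|γ| + 1 : ℝ) : ℂ)
  set d : X := μ • (x : X) - (As + Bs ∘L K) x
  set A := As + (ψ ∘L inl ℂ X U).smulRight d
  set B := Bs + (ψ ∘L inr ℂ X U).smulRight d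
  have hA : MemAX Xm γm A :=
    hAs.add_smulRight (fun z hz => by simp [ψ, hPm z hz, Prod.mk_zero_zero]) d
  have hdata : ∀ k, x1 k = A (x0 k) + B (u0 k) := fun k => by
    have : ψ (x0 k, u0 k) = 0 := hΦv _ (Submodule.subset_span ⟨k, rfl⟩)
    rw [add_smulRight_apply_add_add_smulRight_apply, this, zero_smul, add_zero, hgen k]
  have heig : (A + B ∘L K) x = μ • (x : X) := by
    have : ψ (x, K x) = 1 := by simpa [ψ, Subtype.ext (hPp x x.2)] using hΦx
    rw [add_apply, comp_apply, add_smulRight_apply_add_add_smulRight_apply, this, one_smul]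
    simp [d]
  obtain ⟨M, -, hM⟩ := hsub A B hA hdata
  have hμ : ‖μ‖ = |γ| + 1 := by rw [Complex.norm_real, Real.norm_of_nonneg (by positivity)]
  linarith [norm_le_abs_of_apply_eq_smul hx0 heig hM]

theorem stmt_12
    {X : Type} [NormedAddCommGroup X] [InnerProductSpace ℂ X] [CompleteSpace X] [Nontrivial X]
    {U : Type} [NormedAddCommGroup U] [InnerProductSpace ℂ U] [CompleteSpace U] [Nontrivial U]
    (Xp Xm : Submodule ℂ X) (hXp : IsClosed (Xp : Set X)) (hXm : IsClosed (Xm : Set X))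
    (hinf : Xp ⊓ Xm = ⊥) (hsup : Xp ⊔ Xm = ⊤) [FiniteDimensional ℂ Xp]
    (γm : ℝ) (hγm0 : 0 < γm) (hγm1 : γm < 1)
    -- Π̃ : the projection onto X₊ along X₋, with codomain X₊
    (Pt : X →L[ℂ] Xp) (hPp : ∀ x ∈ Xp, (Pt x : X) = x) (hPm : ∀ x ∈ Xm, Pt x = 0)
    (N : ℕ) (x1 x0 : Fin N → X) (u0 : Fin N → U)
    (As : X →L[ℂ] X) (Bs : U →L[ℂ] X) (hAs : MemAX Xm γm As)
    (hgen : ∀ k : Fin N, x1 k = As (x0 k) + Bs (u0 k))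
    -- K ∈ 𝒦(X,U) with Σ_is,𝒜 ⊆ Σ_{K,γ,𝒜} for some γ ≥ γ₋
    (K : X →L[ℂ] U) (hK : ∀ x ∈ Xm, K x = 0)
    (γ : ℝ) (hγ : γm ≤ γ)
    (hsub : ∀ (A : X →L[ℂ] X) (B : U →L[ℂ] X),
      MemAX Xm γm A → (∀ k : Fin N, x1 k = A (x0 k) + B (u0 k)) →
      ∃ M : ℝ, 1 ≤ M ∧ ∀ k : ℕ, ‖(A + B.comp K) ^ k‖ ≤ M * γ ^ k) :
    -- conclusion: (x, K₊ x) ∈ Ran [Ξ₀₊ ; Υ₀] for every x ∈ X₊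
    ∀ x : Xp, ∃ w : Fin N → ℂ,
      (∑ k : Fin N, w k • Pt (x0 k)) = x ∧ (∑ k : Fin N, w k • u0 k) = K (x : X) :=
  stmt_12_general Xp Xm γm Pt hPp hPm N x1 x0 u0 As Bs hAs hgen K γ hsub
end
end

section
/- Suppose the finite data (x1,x0,u0) of length N satisfy the finite data-generation assumption for the true system (A_s,B_s) ∈ A(X)×L(U,X). Fix γ ∈ (γ₋,1). Then the following are equivalent. (i) The finite data (x1,x0,u0) are informative for stabilization on X₊ with some decay rate γ' ∈ [γ₋,γ). (ii) Ran Ξ₀₊ = X₊, and there exists a right inverse Ξ₀₊† ∈ L(X₊, ℂ^N) of Ξ₀₊ (Ξ₀₊ Ξ₀₊† = I on X₊) such that Ξ₁₊ Ξ₀₊† is power stable with some decay rate γ' ∈ [γ₋,γ). -/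
/-!
Let `ι : X₊ → X` be the inclusion. A closed loop `S = A + BK` with `A ∈ 𝒜(X)` and `K|X₋ = 0`
leaves `X₋` invariant, so it is block triangular: `Π̃ S = F Π̃` for its compression
`F = Π̃ S ι`, and `σ(S) ⊆ σ(F) ∪ σ(S|X₋)`.

(ii) ⇒ (i): for `K = Υ₀ Ξ₀₊† Π̃` every consistent `(A, B)` has compression `Ξ₁₊ Ξ₀₊†`, so the
closed loop has spectral radius at most `max γ' γ₋ = γ'`, and Gelfand's formula gives every
decay rate in `(γ', γ)`.

(i) ⇒ (ii): if `C Π̃ x₀(k) + Θ u₀(k) = 0` for all `k`, the systems `(A_s + t ι C Π̃, B_s + t ι Θ)`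
are consistent and lie in `𝒜(X)`, and their closed loops have compressions `F₀ + t (C + Θ K ι)`.
These have spectral radius at most `γ'`, so their traces stay bounded as `t → ∞`, which forces
`tr (C + Θ K ι) = 0`. For rank-one `C` and `Θ` this says, by duality, that the graph of
`Π̃ B_s K ι` lies in the range of `w ↦ (Ξ₀₊ w, Π̃ B_s Υ₀ w)`; lifting gives the right inverse
`Ξ₀₊†`, and then `Ξ₁₊ Ξ₀₊† = Π̃ (A_s + B_s K) ι` inherits the decay rate `γ'`.
-/

noncomputable section
open ContinuousLinearMap
open scoped ENNReal

open Filter Topology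

def PowerStable {A : Type*} [NormedRing A] (a : A) (γ : ℝ) : Prop :=
  ∃ M : ℝ, 1 ≤ M ∧ ∀ k : ℕ, ‖a ^ k‖ ≤ M * γ ^ k

lemma le_of_forall_pow_le_mul_pow_s13 {x y C : ℝ} (hx : 0 ≤ x) (hy : 0 ≤ y)
    (h : ∀ n : ℕ, x ^ n ≤ C * y ^ n) : x ≤ y := by
  by_contra! hyx
  have hx0 : 0 < x := hy.trans_lt hyx
  have hlim : Tendsto (fun n : ℕ => C * (y / x) ^ n) atTop (𝓝 0) := by
    simpa using (tendsto_pow_atTop_nhds_zero_of_lt_one (div_nonneg hy hx)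
      ((div_lt_one hx0).2 hyx)).const_mul C
  obtain ⟨n, hn⟩ := (hlim.eventually (gt_mem_nhds one_pos)).exists
  have := h n
  rw [div_pow, mul_div_assoc', div_lt_one (pow_pos hx0 n)] at hn
  linarith

namespace PowerStable

variable {A : Type*} [NormedRing A] [NormedAlgebra ℂ A] [CompleteSpace A] {a : A} {γ : ℝ}

lemma spectralRadius_le (h : PowerStable a γ) (hγ : 0 ≤ γ) :
    spectralRadius ℂ a ≤ ENNReal.ofReal γ := by
  obtain ⟨M, -, hM⟩ := h
  refine iSup₂_le fun z hz => ?_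
  rw [← ENNReal.ofReal_coe_nnreal, coe_nnnorm]
  refine ENNReal.ofReal_le_ofReal
    (le_of_forall_pow_le_mul_pow_s13 (C := M * ‖(1 : A)‖) (norm_nonneg z) hγ fun n => ?_)
  calc ‖z‖ ^ n = ‖z ^ n‖ := (norm_pow z n).symm
    _ ≤ ‖a ^ n‖ * ‖(1 : A)‖ := spectrum.norm_le_norm_mul_of_mem (spectrum.pow_mem_pow a n hz)
    _ ≤ M * γ ^ n * ‖(1 : A)‖ := by gcongr; exact hM n
    _ = M * ‖(1 : A)‖ * γ ^ n := by ring

lemma of_spectralRadius_lt (h : spectralRadius ℂ a < ENNReal.ofReal γ) :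
    PowerStable a γ := by
  have hγ : 0 < γ := ENNReal.ofReal_pos.1 (pos_of_gt h)
  have hev : ∀ᶠ n : ℕ in atTop, ‖a ^ n‖ / γ ^ n ≤ 1 := by
    have hlim := spectrum.pow_norm_pow_one_div_tendsto_nhds_spectralRadius a
    filter_upwards [hlim.eventually_lt_const h, eventually_ge_atTop 1] with n hn hn1
    rw [ENNReal.ofReal_lt_ofReal_iff hγ] at hn
    rw [div_le_one (pow_pos hγ n)]
    calc ‖a ^ n‖ = (‖a ^ n‖ ^ (1 / (n : ℝ))) ^ n := by
          rw [one_div, Real.rpow_inv_natCast_pow (norm_nonneg _) (by omega)]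
      _ ≤ γ ^ n := by gcongr
  obtain ⟨C, hC⟩ := (isBoundedUnder_of_eventually_le hev).bddAbove_range
  refine ⟨max 1 C, le_max_left _ _, fun k => ?_⟩
  have hk : ‖a ^ k‖ / γ ^ k ≤ max 1 C := (hC ⟨k, rfl⟩).trans (le_max_right _ _)
  rwa [div_le_iff₀ (pow_pos hγ k)] at hk

end PowerStable

lemma norm_trace_le_of_spectralRadius_le {V : Type*} [NormedAddCommGroup V] [NormedSpace ℂ V]
    [FiniteDimensional ℂ V] (G : V →L[ℂ] V) {ρ : ℝ} (hρ : 0 ≤ ρ)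
    (h : spectralRadius ℂ G ≤ ENNReal.ofReal ρ) :
    ‖LinearMap.trace ℂ V G‖ ≤ Module.finrank ℂ V * ρ := by
  set p := (G : Module.End ℂ V).charpoly
  have hroots : ∀ μ ∈ p.roots, ‖μ‖ ≤ ρ := fun μ hμ => by
    have hspec : μ ∈ spectrum ℂ G := by
      rw [ContinuousLinearMap.spectrum_eq, Module.End.mem_spectrum_iff_isRoot_charpoly]
      exact (Polynomial.mem_roots'.1 hμ).2
    have := (le_iSup₂ (α := ℝ≥0∞) (f := fun z (_ : z ∈ spectrum ℂ G) => (‖z‖₊ : ℝ≥0∞)) μ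
      hspec).trans h
    rwa [← ENNReal.ofReal_coe_nnreal, coe_nnnorm, ENNReal.ofReal_le_ofReal_iff hρ] at this
  have hcard : (p.roots.card : ℝ) ≤ Module.finrank ℂ V := by
    exact_mod_cast (Polynomial.card_roots' p).trans (LinearMap.charpoly_natDegree _).le
  rw [Module.End.trace_eq_sum_roots_charpoly_of_splits (IsAlgClosed.splits p)]
  calc ‖p.roots.sum‖ ≤ (p.roots.map (‖·‖)).sum := norm_multiset_sum_le _
    _ ≤ p.roots.card • ρ := by
      simpa using Multiset.sum_le_card_nsmul (p.roots.map (‖·‖)) ρ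
        (fun x hx => by obtain ⟨μ, hμ, rfl⟩ := Multiset.mem_map.1 hx; exact hroots μ hμ)
    _ ≤ Module.finrank ℂ V * ρ := by rw [nsmul_eq_mul]; gcongr

lemma eq_zero_of_forall_norm_add_natCast_mul_le {a b : ℂ} {C : ℝ}
    (h : ∀ t : ℕ, ‖a + t * b‖ ≤ C) : b = 0 := by
  by_contra hb
  obtain ⟨t, ht⟩ := exists_nat_gt ((C + ‖a‖) / ‖b‖)
  rw [div_lt_iff₀ (norm_pos_iff.2 hb)] at ht
  have := norm_sub_norm_le (t * b) (-a)
  rw [norm_mul, Complex.norm_natCast, norm_neg, sub_neg_eq_add, add_comm] at this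
  linarith [h t]

section BlockTriangular

variable {E V : Type*} [NormedAddCommGroup E] [NormedSpace ℂ E] [CompleteSpace E]
  [NormedAddCommGroup V] [NormedSpace ℂ V] [CompleteSpace V]
  {P : E →L[ℂ] V} {Y : Submodule ℂ E} [CompleteSpace Y]
  {S : E →L[ℂ] E} {F : V →L[ℂ] V} {SY : Y →L[ℂ] Y}

lemma spectrum_subset_union_of_comp_eq (hP : Function.Surjective P)
    (hker : ∀ x, P x = 0 → x ∈ Y) (hSY : ∀ y : Y, (SY y : E) = S y) (hPS : P ∘L S = F ∘L P) :
    spectrum ℂ S ⊆ spectrum ℂ F ∪ spectrum ℂ SY := by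
  intro μ hμ
  by_contra hnot
  rw [Set.mem_union, not_or, spectrum.notMem_iff, spectrum.notMem_iff,
    ContinuousLinearMap.isUnit_iff_bijective, ContinuousLinearMap.isUnit_iff_bijective] at hnot
  obtain ⟨hFμ, hYμ⟩ := hnot
  rw [spectrum.mem_iff, ContinuousLinearMap.isUnit_iff_bijective] at hμ
  set T := algebraMap ℂ (E →L[ℂ] E) μ - S
  have hPT : ∀ x, P (T x) = (algebraMap ℂ (V →L[ℂ] V) μ - F) (P x) := fun x => by
    simp [T, ← ContinuousLinearMap.comp_apply, hPS, Algebra.algebraMap_eq_smul_one]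
  have hTY : ∀ y : Y, ((algebraMap ℂ (Y →L[ℂ] Y) μ - SY) y : E) = T y := fun y => by
    simp [T, hSY]
  refine hμ ⟨(injective_iff_map_eq_zero T).2 fun x hx => ?_, fun y => ?_⟩
  · have hPx : P x = 0 := (injective_iff_map_eq_zero _).1 hFμ.1 _ (by rw [← hPT, hx, map_zero])
    have := (injective_iff_map_eq_zero _).1 hYμ.1 ⟨x, hker x hPx⟩
      (Subtype.ext (by rw [hTY]; exact hx))
    simpa using congrArg Subtype.val this
  · obtain ⟨p, hp⟩ := hFμ.2 (P y)
    obtain ⟨x₀, rfl⟩ := hP p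
    have hz : y - T x₀ ∈ Y := hker _ (by rw [map_sub, hPT, hp, sub_self])
    obtain ⟨w, hw⟩ := hYμ.2 ⟨_, hz⟩
    refine ⟨x₀ + w, ?_⟩
    rw [map_add, ← hTY, hw, add_sub_cancel]

lemma spectralRadius_le_max_of_comp_eq (hP : Function.Surjective P)
    (hker : ∀ x, P x = 0 → x ∈ Y) (hSY : ∀ y : Y, (SY y : E) = S y) (hPS : P ∘L S = F ∘L P) :
    spectralRadius ℂ S ≤ max (spectralRadius ℂ F) (spectralRadius ℂ SY) :=
  iSup₂_le fun μ hμ => (spectrum_subset_union_of_comp_eq hP hker hSY hPS hμ).elim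
    (fun h => le_max_of_le_left (le_iSup₂ (α := ℝ≥0∞) μ h))
    (fun h => le_max_of_le_right (le_iSup₂ (α := ℝ≥0∞) μ h))

end BlockTriangular

section Compression

variable {E V : Type*} [NormedAddCommGroup E] [NormedSpace ℂ E]
  [NormedAddCommGroup V] [NormedSpace ℂ V]
  {P : E →L[ℂ] V} {ι : V →L[ℂ] E} {Y : Submodule ℂ E} {S : E →L[ℂ] E}

lemma comp_eq_compress_comp (hPι : P ∘L ι = .id ℂ V) (hY : ∀ x, P x = 0 ↔ x ∈ Y)
    (hS : ∀ y ∈ Y, S y ∈ Y) : P ∘L S = (P ∘L S ∘L ι) ∘L P := by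
  ext x
  have hPι' : ∀ v, P (ι v) = v := fun v => congr($hPι v)
  have hx : x - ι (P x) ∈ Y := (hY _).1 (by rw [map_sub, hPι', sub_self])
  have := (hY _).2 (hS _ hx)
  rw [map_sub, map_sub, sub_eq_zero] at this
  simpa using this

lemma comp_pow_of_comp_eq {F : V →L[ℂ] V} (h : P ∘L S = F ∘L P) (k : ℕ) :
    P ∘L S ^ k = (F ^ k) ∘L P := by
  induction k with
  | zero => rfl
  | succ k ih =>
    rw [pow_succ, pow_succ, ContinuousLinearMap.mul_def, ContinuousLinearMap.mul_def,
      ← comp_assoc, ih, comp_assoc, h, comp_assoc]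

lemma PowerStable.compress (hPι : P ∘L ι = .id ℂ V) (hY : ∀ x, P x = 0 ↔ x ∈ Y)
    (hS : ∀ y ∈ Y, S y ∈ Y) {γ : ℝ} (h : PowerStable S γ) (hγ : 0 ≤ γ) :
    PowerStable (P ∘L S ∘L ι) γ := by
  obtain ⟨M, -, hM⟩ := h
  refine ⟨max 1 (‖P‖ * ‖ι‖ * M), le_max_left _ _, fun k => ?_⟩
  have hpow : (P ∘L S ∘L ι) ^ k = P ∘L (S ^ k) ∘L ι := calc
    _ = ((P ∘L S ∘L ι) ^ k) ∘L P ∘L ι := by rw [hPι, comp_id]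
    _ = P ∘L (S ^ k) ∘L ι := by
      rw [← comp_assoc, ← comp_pow_of_comp_eq (comp_eq_compress_comp hPι hY hS), comp_assoc]
  calc ‖(P ∘L S ∘L ι) ^ k‖ ≤ ‖P‖ * (‖S ^ k‖ * ‖ι‖) := by
        rw [hpow]; exact (opNorm_comp_le _ _).trans (by gcongr; exact opNorm_comp_le _ _)
    _ ≤ ‖P‖ * (M * γ ^ k * ‖ι‖) := by gcongr; exact hM k
    _ = ‖P‖ * ‖ι‖ * M * γ ^ k := by ring
    _ ≤ max 1 (‖P‖ * ‖ι‖ * M) * γ ^ k := by gcongr; exact le_max_right _ _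

end Compression

section MemAX

variable {X : Type} [NormedAddCommGroup X] [InnerProductSpace ℂ X]
  {Xm : Submodule ℂ X} {γm : ℝ} {A : X →L[ℂ] X}

lemma MemAX.mapsTo (h : MemAX Xm γm A) : ∀ y ∈ Xm, A y ∈ Xm := by
  obtain ⟨Am, hAm, -⟩ := h
  intro y hy
  rw [← hAm ⟨y, hy⟩]
  exact (Am ⟨y, hy⟩).2

lemma MemAX.add (h : MemAX Xm γm A) {D : X →L[ℂ] X} (hD : ∀ x ∈ Xm, D x = 0) :
    MemAX Xm γm (A + D) := by
  obtain ⟨Am, hAm, hρ⟩ := h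
  exact ⟨Am, fun x => by simp [hAm x, hD x x.2], hρ⟩

lemma MemAX.add_comp {U : Type*} [NormedAddCommGroup U] [NormedSpace ℂ U] (h : MemAX Xm γm A)
    (B : U →L[ℂ] X) {K : X →L[ℂ] U} (hK : ∀ x ∈ Xm, K x = 0) : MemAX Xm γm (A + B ∘L K) :=
  h.add fun x hx => by simp [hK x hx]

end MemAX

def synthesis {n E : Type*} [Fintype n] [NormedAddCommGroup E] [NormedSpace ℂ E] (v : n → E) :
    (n → ℂ) →L[ℂ] E :=
  LinearMap.toContinuousLinearMap (Fintype.linearCombination ℂ v)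

section Synthesis

variable {n E F : Type*} [Fintype n] [NormedAddCommGroup E] [NormedSpace ℂ E]
  [NormedAddCommGroup F] [NormedSpace ℂ F]

lemma synthesis_apply (v : n → E) (w : n → ℂ) : synthesis v w = ∑ i, w i • v i :=
  Fintype.linearCombination_apply ℂ v w

@[simp]
lemma synthesis_single [DecidableEq n] (v : n → E) (i : n) : synthesis v (Pi.single i 1) = v i := by
  simp [synthesis_apply, Pi.single_apply]

lemma synthesis_eq_add {x1 x0 : n → E} {u0 : n → F} {A : E →L[ℂ] E} {B : F →L[ℂ] E}
    (h : ∀ k, x1 k = A (x0 k) + B (u0 k)) :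
    synthesis x1 = A ∘L synthesis x0 + B ∘L synthesis u0 := by
  ext w
  simp [synthesis_apply, h, Finset.sum_add_distrib]

end Synthesis

lemma LinearMap.exists_comp_eq_of_dual {K W M V : Type*} [Field K] [AddCommGroup W] [Module K W]
    [AddCommGroup M] [Module K M] [AddCommGroup V] [Module K V] (L : W →ₗ[K] M) (G : V →ₗ[K] M)
    (h : ∀ φ : Module.Dual K M, φ ∘ₗ L = 0 → φ ∘ₗ G = 0) : ∃ H : V →ₗ[K] W, L ∘ₗ H = G := by
  have hrange : ∀ v, G v ∈ LinearMap.range L := fun v => by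
    by_contra hv
    obtain ⟨φ, hφ, hmap⟩ := Submodule.exists_dual_map_eq_bot_of_notMem hv inferInstance
    refine hφ (LinearMap.congr_fun (h φ ?_) v)
    ext w
    exact (Submodule.eq_bot_iff _).1 hmap _ ⟨L w, ⟨w, rfl⟩, rfl⟩
  obtain ⟨H, hH⟩ := Module.projective_lifting_property L.rangeRestrict
    (G.codRestrict _ hrange) L.surjective_rangeRestrict
  exact ⟨H, by ext v; exact congr(($hH v : M))⟩

section Data

variable {X U V : Type} [NormedAddCommGroup X] [InnerProductSpace ℂ X]
  [NormedAddCommGroup U] [NormedSpace ℂ U] [NormedAddCommGroup V] [NormedSpace ℂ V]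
  {Xm : Submodule ℂ X} {γm γ' : ℝ} {P : X →L[ℂ] V} {ι : V →L[ℂ] X}
  {N : ℕ} {x1 x0 : Fin N → X} {u0 : Fin N → U}

lemma comp_synthesis_eq (hPι : P ∘L ι = .id ℂ V) (hY : ∀ x, P x = 0 ↔ x ∈ Xm)
    {A : X →L[ℂ] X} {B : U →L[ℂ] X} (hA : ∀ y ∈ Xm, A y ∈ Xm)
    (hcons : ∀ k, x1 k = A (x0 k) + B (u0 k)) :
    P ∘L synthesis x1 = (P ∘L A ∘L ι) ∘L (P ∘L synthesis x0) + P ∘L B ∘L synthesis u0 := by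
  rw [synthesis_eq_add hcons, comp_add, ← comp_assoc, comp_eq_compress_comp hPι hY hA]
  simp only [comp_assoc]

variable [FiniteDimensional ℂ V] {As : X →L[ℂ] X} {Bs : U →L[ℂ] X} {K : X →L[ℂ] U}

lemma trace_eq_zero_of_forall_powerStable (hPι : P ∘L ι = .id ℂ V)
    (hY : ∀ x, P x = 0 ↔ x ∈ Xm) (hAs : MemAX Xm γm As)
    (hgen : ∀ k, x1 k = As (x0 k) + Bs (u0 k)) (hK : ∀ x ∈ Xm, K x = 0) (hγ' : 0 ≤ γ')
    (hstab : ∀ (A : X →L[ℂ] X) (B : U →L[ℂ] X), MemAX Xm γm A →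
      (∀ k, x1 k = A (x0 k) + B (u0 k)) → PowerStable (A + B ∘L K) γ')
    {C : V →L[ℂ] V} {Θ : U →L[ℂ] V} (hCΘ : ∀ k, C (P (x0 k)) + Θ (u0 k) = 0) :
    LinearMap.trace ℂ V ((C + Θ ∘L K ∘L ι : V →L[ℂ] V) : V →ₗ[ℂ] V) = 0 := by
  refine eq_zero_of_forall_norm_add_natCast_mul_le
    (a := LinearMap.trace ℂ V (P ∘L (As + Bs ∘L K) ∘L ι)) (C := Module.finrank ℂ V * γ') fun t => ?_
  set A := As + ι ∘L ((t : ℂ) • C) ∘L P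
  set B := Bs + ι ∘L ((t : ℂ) • Θ)
  have hA : MemAX Xm γm A := hAs.add fun x hx => by simp [(hY x).2 hx]
  have hcons : ∀ k, x1 k = A (x0 k) + B (u0 k) := fun k => by
    have : ι ((t : ℂ) • (C (P (x0 k)) + Θ (u0 k))) = 0 := by rw [hCΘ k, smul_zero, map_zero]
    simp only [A, B, add_apply, comp_apply, smul_apply, smul_add, map_add] at this ⊢
    rw [hgen k]
    linear_combination (norm := module) -this
  have hcompress : P ∘L (A + B ∘L K) ∘L ι
      = P ∘L (As + Bs ∘L K) ∘L ι + (t : ℂ) • (C + Θ ∘L K ∘L ι) := by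
    ext v
    have hPι' : ∀ v, P (ι v) = v := fun v => congr($hPι v)
    simp [A, B, hPι']
    abel
  have := norm_trace_le_of_spectralRadius_le _ hγ'
    (((hstab A B hA hcons).compress hPι hY (hA.add_comp B hK).mapsTo hγ').spectralRadius_le hγ')
  simpa only [hcompress, toLinearMap_add, toLinearMap_smul, map_add,
    map_smul, smul_eq_mul] using this

lemma exists_rightInverse_of_forall_powerStable (hPι : P ∘L ι = .id ℂ V)
    (hY : ∀ x, P x = 0 ↔ x ∈ Xm) (hAs : MemAX Xm γm As)
    (hgen : ∀ k, x1 k = As (x0 k) + Bs (u0 k)) (hK : ∀ x ∈ Xm, K x = 0) (hγ' : 0 ≤ γ')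
    (hstab : ∀ (A : X →L[ℂ] X) (B : U →L[ℂ] X), MemAX Xm γm A →
      (∀ k, x1 k = A (x0 k) + B (u0 k)) → PowerStable (A + B ∘L K) γ') :
    ∃ Ξd : V →L[ℂ] (Fin N → ℂ), (P ∘L synthesis x0) ∘L Ξd = .id ℂ V ∧
      (P ∘L Bs ∘L synthesis u0) ∘L Ξd = P ∘L Bs ∘L K ∘L ι := by
  set L : (Fin N → ℂ) →ₗ[ℂ] V × V :=
    (P ∘L synthesis x0 : (Fin N → ℂ) →ₗ[ℂ] V).prod (P ∘L Bs ∘L synthesis u0)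
  set G : V →ₗ[ℂ] V × V := LinearMap.id.prod (P ∘L Bs ∘L K ∘L ι : V →ₗ[ℂ] V)
  suffices h : ∀ φ : Module.Dual ℂ (V × V), φ ∘ₗ L = 0 → φ ∘ₗ G = 0 by
    obtain ⟨H, hH⟩ := LinearMap.exists_comp_eq_of_dual L G h
    exact ⟨LinearMap.toContinuousLinearMap H, ext fun v => congr(($hH v).1),
      ext fun v => congr(($hH v).2)⟩
  refine fun φ hφL => LinearMap.ext fun p => ?_
  set φ₁ := φ ∘ₗ LinearMap.inl ℂ V V
  set φ₂ := φ ∘ₗ LinearMap.inr ℂ V V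
  have hφ : ∀ a b, φ (a, b) = φ₁ a + φ₂ b := fun a b => by
    simp [φ₁, φ₂, ← map_add]
  have htrace := trace_eq_zero_of_forall_powerStable hPι hY hAs hgen hK hγ' hstab
    (C := LinearMap.toContinuousLinearMap (φ₁.smulRight p))
    (Θ := (LinearMap.toContinuousLinearMap φ₂ ∘L P ∘L Bs).smulRight p) fun k => by
      have : φ₁ (P (x0 k)) + φ₂ (P (Bs (u0 k))) = 0 := by
        simpa [L, hφ] using LinearMap.congr_fun hφL (Pi.single k 1)
      simp [← add_smul, this]
  have hrank : ((LinearMap.toContinuousLinearMap (φ₁.smulRight p) +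
      (LinearMap.toContinuousLinearMap φ₂ ∘L P ∘L Bs).smulRight p ∘L K ∘L ι : V →L[ℂ] V) :
        V →ₗ[ℂ] V) = (φ₁ + φ₂ ∘ₗ (P ∘L Bs ∘L K ∘L ι : V →ₗ[ℂ] V)).smulRight p := by
    ext v
    simp [add_smul]
  rw [hrank, LinearMap.trace_smulRight] at htrace
  simpa [G, hφ] using htrace

lemma exists_powerStable_rightInverse_of_forall_powerStable (hPι : P ∘L ι = .id ℂ V)
    (hY : ∀ x, P x = 0 ↔ x ∈ Xm) (hAs : MemAX Xm γm As)
    (hgen : ∀ k, x1 k = As (x0 k) + Bs (u0 k)) (hK : ∀ x ∈ Xm, K x = 0) (hγ' : 0 ≤ γ')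
    (hstab : ∀ (A : X →L[ℂ] X) (B : U →L[ℂ] X), MemAX Xm γm A →
      (∀ k, x1 k = A (x0 k) + B (u0 k)) → PowerStable (A + B ∘L K) γ') :
    ∃ Ξd : V →L[ℂ] (Fin N → ℂ), (P ∘L synthesis x0) ∘L Ξd = .id ℂ V ∧
      PowerStable ((P ∘L synthesis x1) ∘L Ξd) γ' := by
  obtain ⟨Ξd, hΞd, hΞdB⟩ := exists_rightInverse_of_forall_powerStable hPι hY hAs hgen hK hγ' hstab
  refine ⟨Ξd, hΞd, ?_⟩
  have hF : (P ∘L synthesis x1) ∘L Ξd = P ∘L (As + Bs ∘L K) ∘L ι := by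
    rw [comp_synthesis_eq hPι hY hAs.mapsTo hgen, add_comp, comp_assoc _ _ Ξd, hΞd, hΞdB]
    simp only [comp_id, add_comp, comp_add, comp_assoc]
  rw [hF]
  exact (hstab As Bs hAs hgen).compress hPι hY (hAs.add_comp Bs hK).mapsTo hγ'

lemma powerStable_of_rightInverse [CompleteSpace X] (hPι : P ∘L ι = .id ℂ V)
    (hY : ∀ x, P x = 0 ↔ x ∈ Xm) {Ξd : V →L[ℂ] (Fin N → ℂ)}
    (hΞd : (P ∘L synthesis x0) ∘L Ξd = .id ℂ V) (hF : PowerStable ((P ∘L synthesis x1) ∘L Ξd) γ')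
    (hγm : γm ≤ γ') (hγ' : 0 ≤ γ') {γ : ℝ} (hγ : γ' < γ) {A : X →L[ℂ] X} {B : U →L[ℂ] X}
    (hA : MemAX Xm γm A) (hcons : ∀ k, x1 k = A (x0 k) + B (u0 k)) :
    PowerStable (A + B ∘L (synthesis u0 ∘L Ξd ∘L P)) γ := by
  have : CompleteSpace Xm := by
    have : IsClosed (Xm : Set X) := by
      convert P.isClosed_ker using 1
      exact Set.ext fun x => (hY x).symm
    exact this.completeSpace_coe
  have hK : ∀ x ∈ Xm, (synthesis u0 ∘L Ξd ∘L P) x = 0 := fun x hx => by simp [(hY x).2 hx]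
  obtain ⟨Am, hAm, hρ⟩ := hA.add_comp B hK
  have hPS : P ∘L (A + B ∘L (synthesis u0 ∘L Ξd ∘L P)) = ((P ∘L synthesis x1) ∘L Ξd) ∘L P := by
    rw [comp_synthesis_eq hPι hY hA.mapsTo hcons, add_comp, comp_assoc _ _ Ξd, hΞd, comp_id,
      comp_add, comp_eq_compress_comp hPι hY hA.mapsTo]
    simp only [add_comp, comp_assoc]
  refine PowerStable.of_spectralRadius_lt (calc
    _ ≤ max (spectralRadius ℂ ((P ∘L synthesis x1) ∘L Ξd)) (spectralRadius ℂ Am) :=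
      spectralRadius_le_max_of_comp_eq (fun v => ⟨ι v, congr($hPι v)⟩) (fun x => (hY x).1) hAm hPS
    _ ≤ ENNReal.ofReal γ' :=
      max_le (hF.spectralRadius_le hγ') (hρ.trans (ENNReal.ofReal_le_ofReal hγm))
    _ < ENNReal.ofReal γ := (ENNReal.ofReal_lt_ofReal_iff (hγ'.trans_lt hγ)).2 hγ)

end Data

lemma apply_eq_zero_iff_mem_of_sup_eq_top {E : Type*} [AddCommGroup E] [Module ℂ E]
    {Xp Xm : Submodule ℂ E} (hsup : Xp ⊔ Xm = ⊤) {P : E →ₗ[ℂ] Xp}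
    (hPp : ∀ x ∈ Xp, (P x : E) = x) (hPm : ∀ x ∈ Xm, P x = 0) (x : E) : P x = 0 ↔ x ∈ Xm := by
  refine ⟨fun hx => ?_, hPm x⟩
  obtain ⟨a, ha, b, hb, rfl⟩ := Submodule.mem_sup.1 (hsup ▸ Submodule.mem_top : x ∈ Xp ⊔ Xm)
  have : a = 0 := by
    rw [← hPp a ha, ← add_zero (P a), ← hPm b hb, ← map_add, hx, Submodule.coe_zero]
  rwa [this, zero_add]

theorem stmt_13_general
    {X : Type} [NormedAddCommGroup X] [InnerProductSpace ℂ X] [CompleteSpace X]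
    {U : Type} [NormedAddCommGroup U] [InnerProductSpace ℂ U]
    (Xp Xm : Submodule ℂ X)
    (hsup : Xp ⊔ Xm = ⊤) [FiniteDimensional ℂ Xp]
    (γm : ℝ) (hγm0 : 0 < γm)
    -- Π̃ : the projection onto X₊ along X₋, with codomain X₊
    (Pt : X →L[ℂ] Xp) (hPp : ∀ x ∈ Xp, (Pt x : X) = x) (hPm : ∀ x ∈ Xm, Pt x = 0)
    (N : ℕ) (x1 x0 : Fin N → X) (u0 : Fin N → U)
    (As : X →L[ℂ] X) (Bs : U →L[ℂ] X) (hAs : MemAX Xm γm As)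
    (hgen : ∀ k : Fin N, x1 k = As (x0 k) + Bs (u0 k))
    -- the synthesis operators Ξ₁₊ = Π̃Ξ₁ and Ξ₀₊ = Π̃Ξ₀
    (Ξ1p Ξ0p : (Fin N → ℂ) →L[ℂ] Xp)
    (hΞ1p : ∀ w : Fin N → ℂ, Ξ1p w = ∑ k : Fin N, w k • Pt (x1 k))
    (hΞ0p : ∀ w : Fin N → ℂ, Ξ0p w = ∑ k : Fin N, w k • Pt (x0 k))
    (γ : ℝ) :
    -- (i) informativity for stabilization on X₊ with some decay rate γ' ∈ [γ₋, γ)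
    (∃ γ' : ℝ, γm ≤ γ' ∧ γ' < γ ∧
      ∃ K : X →L[ℂ] U, (∀ x ∈ Xm, K x = 0) ∧
        ∀ (A : X →L[ℂ] X) (B : U →L[ℂ] X),
          MemAX Xm γm A → (∀ k : Fin N, x1 k = A (x0 k) + B (u0 k)) →
          ∃ M : ℝ, 1 ≤ M ∧ ∀ k : ℕ, ‖(A + B.comp K) ^ k‖ ≤ M * γ' ^ k)
    ↔
    -- (ii)
    (Function.Surjective ⇑Ξ0p ∧
      ∃ Ξd : Xp →L[ℂ] (Fin N → ℂ), Ξ0p ∘L Ξd = ContinuousLinearMap.id ℂ Xp ∧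
        ∃ γ' : ℝ, γm ≤ γ' ∧ γ' < γ ∧
          ∃ M : ℝ, 1 ≤ M ∧ ∀ k : ℕ, ‖(Ξ1p ∘L Ξd) ^ k‖ ≤ M * γ' ^ k) := by
  set ι := Xp.subtypeL
  have hPι : Pt ∘L ι = .id ℂ Xp := ext fun p => Subtype.ext (hPp p p.2)
  have hY : ∀ x, Pt x = 0 ↔ x ∈ Xm :=
    apply_eq_zero_iff_mem_of_sup_eq_top hsup (P := (Pt : X →ₗ[ℂ] Xp)) hPp hPm
  have hΞ0 : Ξ0p = Pt ∘L synthesis x0 := ext fun w => by simp [hΞ0p, synthesis_apply]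
  have hΞ1 : Ξ1p = Pt ∘L synthesis x1 := ext fun w => by simp [hΞ1p, synthesis_apply]
  subst hΞ0 hΞ1
  constructor
  · rintro ⟨γ', hγ'l, hγ'u, K, hK, hstab⟩
    obtain ⟨Ξd, hΞd, hF⟩ :=
      exists_powerStable_rightInverse_of_forall_powerStable hPι hY hAs hgen hK (by linarith) hstab
    exact ⟨fun p => ⟨Ξd p, congr($hΞd p)⟩, Ξd, hΞd, γ', hγ'l, hγ'u, hF⟩
  · rintro ⟨-, Ξd, hΞd, γ', hγ'l, hγ'u, hF⟩
    refine ⟨(γ' + γ) / 2, by linarith, by linarith, synthesis u0 ∘L Ξd ∘L Pt,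
      fun x hx => by simp [(hY x).2 hx], fun A B hA hcons => ?_⟩
    exact powerStable_of_rightInverse hPι hY hΞd hF hγ'l (by linarith) (by linarith) hA hcons

theorem stmt_13
    {X : Type} [NormedAddCommGroup X] [InnerProductSpace ℂ X] [CompleteSpace X] [Nontrivial X]
    {U : Type} [NormedAddCommGroup U] [InnerProductSpace ℂ U] [CompleteSpace U] [Nontrivial U]
    (Xp Xm : Submodule ℂ X) (hXp : IsClosed (Xp : Set X)) (hXm : IsClosed (Xm : Set X))
    (hinf : Xp ⊓ Xm = ⊥) (hsup : Xp ⊔ Xm = ⊤) [FiniteDimensional ℂ Xp]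
    (γm : ℝ) (hγm0 : 0 < γm) (hγm1 : γm < 1)
    -- Π̃ : the projection onto X₊ along X₋, with codomain X₊
    (Pt : X →L[ℂ] Xp) (hPp : ∀ x ∈ Xp, (Pt x : X) = x) (hPm : ∀ x ∈ Xm, Pt x = 0)
    (N : ℕ) (x1 x0 : Fin N → X) (u0 : Fin N → U)
    (As : X →L[ℂ] X) (Bs : U →L[ℂ] X) (hAs : MemAX Xm γm As)
    (hgen : ∀ k : Fin N, x1 k = As (x0 k) + Bs (u0 k))
    -- the synthesis operators Ξ₁₊ = Π̃Ξ₁ and Ξ₀₊ = Π̃Ξ₀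
    (Ξ1p Ξ0p : (Fin N → ℂ) →L[ℂ] Xp)
    (hΞ1p : ∀ w : Fin N → ℂ, Ξ1p w = ∑ k : Fin N, w k • Pt (x1 k))
    (hΞ0p : ∀ w : Fin N → ℂ, Ξ0p w = ∑ k : Fin N, w k • Pt (x0 k))
    (γ : ℝ) (hγl : γm < γ) (hγu : γ < 1) :
    -- (i) informativity for stabilization on X₊ with some decay rate γ' ∈ [γ₋, γ)
    (∃ γ' : ℝ, γm ≤ γ' ∧ γ' < γ ∧
      ∃ K : X →L[ℂ] U, (∀ x ∈ Xm, K x = 0) ∧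
        ∀ (A : X →L[ℂ] X) (B : U →L[ℂ] X),
          MemAX Xm γm A → (∀ k : Fin N, x1 k = A (x0 k) + B (u0 k)) →
          ∃ M : ℝ, 1 ≤ M ∧ ∀ k : ℕ, ‖(A + B.comp K) ^ k‖ ≤ M * γ' ^ k)
    ↔
    -- (ii)
    (Function.Surjective ⇑Ξ0p ∧
      ∃ Ξd : Xp →L[ℂ] (Fin N → ℂ), Ξ0p ∘L Ξd = ContinuousLinearMap.id ℂ Xp ∧
        ∃ γ' : ℝ, γm ≤ γ' ∧ γ' < γ ∧
          ∃ M : ℝ, 1 ≤ M ∧ ∀ k : ℕ, ‖(Ξ1p ∘L Ξd) ^ k‖ ≤ M * γ' ^ k) :=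
  stmt_13_general Xp Xm hsup γm hγm0 Pt hPp hPm N x1 x0 u0 As Bs hAs hgen Ξ1p Ξ0p hΞ1p hΞ0p γ
end
end

section
/- Let H and Y be complex Hilbert spaces and T ∈ L(H, Y). Then there exists a constant c ≥ 0 such that T*T ≤ c² (T*T)² as operators on H if and only if the range of T is closed in Y. -/
/-!
With `S = T†T` one has `re ⟪(c²S² - S)x, x⟫ = c²‖Sx‖² - ‖Tx‖²`, so the operator inequality says
exactly that `‖Tx‖ ≤ c‖Sx‖` for all `x`.

If the range of `T` is closed, the open mapping theorem gives a preimage `x'` of `Tx` with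
`‖x'‖ ≤ C‖Tx‖`, and then `‖Tx‖² = ⟪Sx, x'⟫ ≤ C‖Sx‖‖Tx‖`.

Conversely, from `‖Sx‖² = ⟪Tx, TSx⟫` the bound gives `‖Sx‖ ≤ c²‖S(Sx)‖`: `S` is bounded below on
its range, hence on its closure `(ker S)ᗮ = (ker T)ᗮ`. Since `‖Su‖ ≤ ‖T†‖‖Tu‖`, `T` is bounded
below on `(ker T)ᗮ`, and its range, which is the image of `(ker T)ᗮ`, is closed.
-/

open ContinuousLinearMap

lemma le_of_sq_le_mul {a b : ℝ} (hb : 0 ≤ b) (h : a ^ 2 ≤ b * a) : a ≤ b := by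
  nlinarith

namespace ContinuousLinearMap

open RCLike
open scoped InnerProduct InnerProductSpace

variable {𝕜 E F : Type*} [RCLike 𝕜] [NormedAddCommGroup E] [InnerProductSpace 𝕜 E] [CompleteSpace E]
  [NormedAddCommGroup F] [InnerProductSpace 𝕜 F]

lemma _root_.IsSelfAdjoint.norm_le_of_mem_orthogonal_ker {S : E →L[𝕜] E} (hS : IsSelfAdjoint S)
    {C : ℝ} (h : ∀ x, ‖S x‖ ≤ C * ‖S (S x)‖) : ∀ u ∈ S.kerᗮ, ‖u‖ ≤ C * ‖S u‖ := by
  have hclosed : IsClosed {u : E | ‖u‖ ≤ C * ‖S u‖} := isClosed_le (by fun_prop) (by fun_prop)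
  intro u hu
  rw [orthogonal_ker, hS.adjoint_eq, ← SetLike.mem_coe, Submodule.topologicalClosure_coe,
    LinearMap.coe_range] at hu
  exact closure_minimal (Set.range_subset_iff.2 h) hclosed hu

lemma isClosed_range_of_forall_mem_orthogonal_ker_norm_le (T : E →L[𝕜] F) {C : ℝ}
    (h : ∀ u ∈ T.kerᗮ, ‖u‖ ≤ C * ‖T u‖) : IsClosed (Set.range T) := by
  set f := T ∘L T.kerᗮ.subtypeL
  have hf : AntilipschitzWith C.toNNReal f := f.antilipschitz_of_bound fun u =>
    (h u u.2).trans (mul_le_mul_of_nonneg_right C.le_coe_toNNReal (norm_nonneg _))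
  have hrange : Set.range f = Set.range T := by
    refine subset_antisymm (fun _ ⟨u, hu⟩ => ⟨u, hu⟩) ?_
    rintro _ ⟨x, rfl⟩
    refine ⟨⟨x - T.ker.starProjection x, T.ker.sub_starProjection_mem_orthogonal x⟩, ?_⟩
    have hker : T (T.ker.starProjection x) = 0 := T.ker.starProjection_apply_mem x
    simp [f, hker]
  exact hrange ▸ hf.isClosed_range f.uniformContinuous

variable [CompleteSpace F]

lemma re_inner_smul_sq_sub_adjoint_comp_self_apply (T : E →L[𝕜] F) (c : ℝ) (x : E) :
    re ⟪((c : 𝕜) ^ 2 • (T† ∘L T) ^ 2 - T† ∘L T) x, x⟫_𝕜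
      = c ^ 2 * ‖(T† ∘L T) x‖ ^ 2 - ‖T x‖ ^ 2 := by
  have hS : (T† ∘L T)† = T† ∘L T := (isPositive_adjoint_comp_self T).isSelfAdjoint
  rw [apply_norm_sq_eq_inner_adjoint_left T, apply_norm_sq_eq_inner_adjoint_left (T† ∘L T), hS,
    sub_apply, inner_sub_left, map_sub, smul_apply, inner_smul_left, pow_two (T† ∘L T), mul_def,
    ← ofReal_pow, conj_ofReal, re_ofReal_mul]

lemma isPositive_smul_sq_sub_adjoint_comp_self_iff (T : E →L[𝕜] F) {c : ℝ} (hc : 0 ≤ c) :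
    ((c : 𝕜) ^ 2 • (T† ∘L T) ^ 2 - T† ∘L T).IsPositive ↔ ∀ x, ‖T x‖ ≤ c * ‖(T† ∘L T) x‖ := by
  have hS := (isPositive_adjoint_comp_self T).isSelfAdjoint
  have hsa : IsSelfAdjoint ((c : 𝕜) ^ 2 • (T† ∘L T) ^ 2 - T† ∘L T) :=
    (((show IsSelfAdjoint (c : 𝕜) from conj_ofReal c).pow 2).smul (hS.pow 2)).sub hS
  simp only [isPositive_def', hsa, true_and, reApplyInnerSelf,
    re_inner_smul_sq_sub_adjoint_comp_self_apply, sub_nonneg, ← mul_pow]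
  exact forall_congr' fun x => pow_le_pow_iff_left₀ (norm_nonneg _) (by positivity) two_ne_zero

lemma exists_norm_le_mul_norm_adjoint_comp_self_apply (T : E →L[𝕜] F)
    (hT : IsClosed (Set.range T)) : ∃ c, 0 ≤ c ∧ ∀ x, ‖T x‖ ≤ c * ‖(T† ∘L T) x‖ := by
  have : CompleteSpace T.range := (LinearMap.coe_range (T : E →ₗ[𝕜] F) ▸ hT).completeSpace_coe
  obtain ⟨C, hC, hpre⟩ := exists_preimage_norm_le T.rangeRestrict Set.rangeFactorization_surjective
  refine ⟨C, hC.le, fun x => le_of_sq_le_mul (by positivity) ?_⟩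
  obtain ⟨x', hx', hnorm⟩ := hpre (T.rangeRestrict x)
  replace hx' : T x' = T x := congrArg Subtype.val hx'
  calc ‖T x‖ ^ 2 = re ⟪(T† ∘L T) x, x'⟫_𝕜 := by
        rw [comp_apply, adjoint_inner_left, hx', inner_self_eq_norm_sq]
    _ ≤ ‖(T† ∘L T) x‖ * ‖x'‖ := re_inner_le_norm _ _
    _ ≤ ‖(T† ∘L T) x‖ * (C * ‖T x‖) := by gcongr; exact hnorm
    _ = C * ‖(T† ∘L T) x‖ * ‖T x‖ := by ring

lemma norm_adjoint_comp_self_apply_le (T : E →L[𝕜] F) {c : ℝ} (hc : 0 ≤ c)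
    (hT : ∀ x, ‖T x‖ ≤ c * ‖(T† ∘L T) x‖) (x : E) :
    ‖(T† ∘L T) x‖ ≤ c ^ 2 * ‖(T† ∘L T) ((T† ∘L T) x)‖ := by
  set S := T† ∘L T
  refine le_of_sq_le_mul (by positivity) ?_
  calc ‖S x‖ ^ 2 = re ⟪T x, T (S x)⟫_𝕜 := by
        rw [← inner_self_eq_norm_sq (𝕜 := 𝕜)]
        exact congrArg re (adjoint_inner_left T (S x) (T x))
    _ ≤ ‖T x‖ * ‖T (S x)‖ := re_inner_le_norm _ _
    _ ≤ (c * ‖S x‖) * (c * ‖S (S x)‖) := by gcongr <;> apply hT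
    _ = c ^ 2 * ‖S (S x)‖ * ‖S x‖ := by ring

lemma isClosed_range_of_norm_le_mul_norm_adjoint_comp_self_apply (T : E →L[𝕜] F) {c : ℝ}
    (hc : 0 ≤ c) (hT : ∀ x, ‖T x‖ ≤ c * ‖(T† ∘L T) x‖) : IsClosed (Set.range T) := by
  have hS := (isPositive_adjoint_comp_self T).isSelfAdjoint.norm_le_of_mem_orthogonal_ker
    (norm_adjoint_comp_self_apply_le T hc hT)
  refine T.isClosed_range_of_forall_mem_orthogonal_ker_norm_le (C := c ^ 2 * ‖T†‖) fun u hu => ?_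
  rw [← ker_adjoint_comp_self] at hu
  calc ‖u‖ ≤ c ^ 2 * ‖(T† ∘L T) u‖ := hS u hu
    _ ≤ c ^ 2 * (‖T†‖ * ‖T u‖) := by gcongr; exact le_opNorm (T†) (T u)
    _ = c ^ 2 * ‖T†‖ * ‖T u‖ := by ring

end ContinuousLinearMap

theorem stmt_18
    {H : Type} [NormedAddCommGroup H] [InnerProductSpace ℂ H] [CompleteSpace H]
    {Y : Type} [NormedAddCommGroup Y] [InnerProductSpace ℂ Y] [CompleteSpace Y]
    (T : H →L[ℂ] Y) :
    (∃ c : ℝ, 0 ≤ c ∧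
        ((c ^ 2 : ℂ) • ((adjoint T ∘L T) ^ 2) - adjoint T ∘L T).IsPositive)
      ↔ IsClosed (Set.range ⇑T) := by
  constructor
  · rintro ⟨c, hc, hpos⟩
    exact T.isClosed_range_of_norm_le_mul_norm_adjoint_comp_self_apply hc
      ((T.isPositive_smul_sq_sub_adjoint_comp_self_iff hc).1 hpos)
  · intro hT
    obtain ⟨c, hc, hbound⟩ := T.exists_norm_le_mul_norm_adjoint_comp_self_apply hT
    exact ⟨c, hc, (T.isPositive_smul_sq_sub_adjoint_comp_self_iff hc).2 hbound⟩
end
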